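/- arXiv:1805.02918 — 11 statements merged into one kernel-verified Lean document; each statement's English description precedes it below -/
import Mathlib

section
/- Let T be a semigroup and e ∈ T an idempotent. The left ideal Te is minimal by inclusion among the left ideals of T of the form Tf with f an idempotent of T if and only if the right ideal eT is minimal by inclusion among the right ideals of T of the form fT with f an idempotent of T. -/
/-- If `e, f` are idempotents and `fT ⊆ eT` and left ideal `Te` is minimal, then `fe = e`. -/
private lemma aux_dir {T : Type*} [Semigroup T] (e : T) (he : e * e = e)
    (h : ∀ f : T, f * f = f →
        {x | ∃ t : T, x = t * f} ⊆ {x | ∃ t : T, x = t * e} →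
        {x | ∃ t : T, x = t * e} ⊆ {x | ∃ t : T, x = t * f})
    (f : T) (hf : f * f = f)
    (hsub : {x | ∃ t : T, x = f * t} ⊆ {x | ∃ t : T, x = e * t}) :
    {x | ∃ t : T, x = e * t} ⊆ {x | ∃ t : T, x = f * t} := by
  -- f ∈ fT ⊆ eT, so f = e * s, hence e * f = f
  obtain ⟨s, hs⟩ : f ∈ {x | ∃ t : T, x = e * t} := hsub ⟨f, hf.symm⟩
  have hef : e * f = f := by rw [hs, ← mul_assoc, he]
  -- g = f * e is idempotent
  set g := f * e with hg
  have hgg : g * g = g := by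
    rw [hg]
    calc f * e * (f * e) = f * (e * f) * e := by simp [mul_assoc]
    _ = f * e := by rw [hef, hf]
  -- T g ⊆ T e trivially
  have hTg : {x | ∃ t : T, x = t * g} ⊆ {x | ∃ t : T, x = t * e} := by
    rintro x ⟨t, rfl⟩
    exact ⟨t * f, by rw [hg, mul_assoc]⟩
  -- minimality: Te ⊆ Tg; apply to e
  obtain ⟨t, ht⟩ : e ∈ {x | ∃ t : T, x = t * g} := h g hgg hTg ⟨e, he.symm⟩
  -- e * g = e
  have heg : e * g = e := by
    calc e * g = t * g * g := by rw [ht]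
    _ = t * g := by rw [mul_assoc, hgg]
    _ = e := ht.symm
  -- hence f * e = e
  have hfe : f * e = e := by
    have : e * f * e = e := by rw [mul_assoc]; exact heg
    rwa [hef] at this
  rintro x ⟨u, rfl⟩
  exact ⟨e * u, by rw [← mul_assoc, hfe]⟩

/-- Symmetric version: sides swapped. -/
private lemma aux_dir' {T : Type*} [Semigroup T] (e : T) (he : e * e = e)
    (h : ∀ f : T, f * f = f →
        {x | ∃ t : T, x = f * t} ⊆ {x | ∃ t : T, x = e * t} →
        {x | ∃ t : T, x = e * t} ⊆ {x | ∃ t : T, x = f * t})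
    (f : T) (hf : f * f = f)
    (hsub : {x | ∃ t : T, x = t * f} ⊆ {x | ∃ t : T, x = t * e}) :
    {x | ∃ t : T, x = t * e} ⊆ {x | ∃ t : T, x = t * f} := by
  obtain ⟨s, hs⟩ : f ∈ {x | ∃ t : T, x = t * e} := hsub ⟨f, hf.symm⟩
  have hfe : f * e = f := by rw [hs, mul_assoc, he]
  set g := e * f with hg
  have hgg : g * g = g := by
    rw [hg]
    calc e * f * (e * f) = e * (f * e) * f := by simp [mul_assoc]
    _ = e * f := by rw [hfe, mul_assoc, hf]
  have hTg : {x | ∃ t : T, x = g * t} ⊆ {x | ∃ t : T, x = e * t} := by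
    rintro x ⟨t, rfl⟩
    exact ⟨f * t, by rw [hg, mul_assoc]⟩
  obtain ⟨t, ht⟩ : e ∈ {x | ∃ t : T, x = g * t} := h g hgg hTg ⟨e, he.symm⟩
  have heg : g * e = e := by
    calc g * e = g * (g * t) := by rw [ht]
    _ = g * t := by rw [← mul_assoc, hgg]
    _ = e := ht.symm
  have hef : e * f = e := by
    have : e * (f * e) = e := by rw [← mul_assoc]; exact heg
    rwa [hfe] at this
  rintro x ⟨u, rfl⟩
  exact ⟨u * e, by rw [mul_assoc, hef]⟩

/-- Proposition 1.3: Let `T` be a semigroup and `e ∈ T` an idempotent. The left ideal `Te`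
is minimal by inclusion among the left ideals of `T` generated by idempotents if and only if
the right ideal `eT` is minimal by inclusion among the right ideals of `T` generated by
idempotents. -/
theorem leftIdeal_minimal_iff_rightIdeal_minimal {T : Type*} [Semigroup T]
    (e : T) (he : e * e = e) :
    (∀ f : T, f * f = f →
        {x | ∃ t : T, x = t * f} ⊆ {x | ∃ t : T, x = t * e} →
        {x | ∃ t : T, x = t * e} ⊆ {x | ∃ t : T, x = t * f}) ↔
    (∀ f : T, f * f = f →
        {x | ∃ t : T, x = f * t} ⊆ {x | ∃ t : T, x = e * t} →
        {x | ∃ t : T, x = e * t} ⊆ {x | ∃ t : T, x = f * t}) := by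
  exact ⟨fun h => aux_dir e he h, fun h => aux_dir' e he h⟩
end

section
/- Let T be a semigroup, e ∈ T an idempotent, and suppose Te is a minimal left ideal of T (no left ideal of T is strictly contained in Te). Then the set G_e = {a ∈ T | ea = a and ae = a} is a subgroup of T: it is closed under multiplication, e is a two-sided identity of G_e, and every element of G_e has a two-sided inverse in G_e with respect to e. -/
/-- Auxiliary: under the minimality hypothesis, every element of `G_e` has a
left inverse lying in `G_e`. -/
lemma left_inv_aux {T : Type*} [Semigroup T] (e : T) (he : e * e = e)
    (hmin : ∀ I : Set T, I.Nonempty → (∀ t : T, ∀ x ∈ I, t * x ∈ I) →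
      I ⊆ {x | ∃ t : T, x = t * e} → I = {x | ∃ t : T, x = t * e})
    (a : T) (ha1 : e * a = a) (ha2 : a * e = a) :
    ∃ b : T, e * b = b ∧ b * e = b ∧ b * a = e := by
  have hI := hmin {x | ∃ t : T, x = t * a} ⟨a, e, ha1.symm⟩
    (by rintro t x ⟨s, rfl⟩; exact ⟨t * s, (mul_assoc t s a).symm⟩)
    (by rintro x ⟨s, rfl⟩
        exact ⟨s * a, by rw [mul_assoc, ha2]⟩)
  have heI : e ∈ {x : T | ∃ t : T, x = t * a} := by
    rw [hI]; exact ⟨e, he.symm⟩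
  obtain ⟨t, ht⟩ := heI
  refine ⟨e * t * e, ?_, ?_, ?_⟩
  · simp only [← mul_assoc, he]
  · simp only [mul_assoc, he]
  · calc e * t * e * a = e * t * (e * a) := by rw [mul_assoc]
      _ = e * (t * a) := by rw [ha1, mul_assoc]
      _ = e := by rw [← ht, he]

/-- Proposition 1.5: If `Te` is a minimal left ideal of a semigroup `T` and `e` is an
idempotent, then `G_e = {a | ea = a ∧ ae = a}` forms a subgroup of `T`: it is closed under
multiplication, `e` is a two-sided identity on it, and every element has a two-sided inverse
in `G_e` with respect to `e`. -/
theorem subgroup_of_minimal_left_ideal {T : Type*} [Semigroup T] (e : T) (he : e * e = e)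
    (hmin : ∀ I : Set T, I.Nonempty → (∀ t : T, ∀ x ∈ I, t * x ∈ I) →
      I ⊆ {x | ∃ t : T, x = t * e} → I = {x | ∃ t : T, x = t * e}) :
    (∀ a ∈ {a : T | e * a = a ∧ a * e = a}, ∀ b ∈ {a : T | e * a = a ∧ a * e = a},
        a * b ∈ {a : T | e * a = a ∧ a * e = a}) ∧
    e ∈ {a : T | e * a = a ∧ a * e = a} ∧
    (∀ a ∈ {a : T | e * a = a ∧ a * e = a}, e * a = a ∧ a * e = a) ∧
    (∀ a ∈ {a : T | e * a = a ∧ a * e = a},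
        ∃ b ∈ {a : T | e * a = a ∧ a * e = a}, a * b = e ∧ b * a = e) := by
  refine ⟨?_, ⟨he, he⟩, fun a ha => ha, ?_⟩
  · rintro a ⟨ha1, ha2⟩ b ⟨hb1, hb2⟩
    exact ⟨by rw [← mul_assoc, ha1], by rw [mul_assoc, hb2]⟩
  · rintro a ⟨ha1, ha2⟩
    obtain ⟨b, hb1, hb2, hba⟩ := left_inv_aux e he hmin a ha1 ha2
    obtain ⟨c, _, _, hcb⟩ := left_inv_aux e he hmin b hb1 hb2
    have hab : a * b = e := by
      calc a * b = e * (a * b) := by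
            rw [← mul_assoc, ha1]
        _ = c * b * (a * b) := by rw [hcb]
        _ = c * (b * a) * b := by rw [mul_assoc, mul_assoc, mul_assoc]
        _ = c * b := by rw [hba, mul_assoc, hb1]
        _ = e := hcb
    exact ⟨b, ⟨hb1, hb2⟩, hab, hba⟩
end

section
/- Let S be a monoid, A a left S-act and a ∈ A. The following conditions are equivalent: (1) a is act-regular, i.e., there exists an S-act homomorphism φ : Sa → S (S acting on itself by left multiplication) with φ(a)·a = a; (2) there exist an idempotent e ∈ S and an S-act isomorphism ψ : Sa → Se with ψ(a) = e; (3) there exists an idempotent e ∈ S such that the S-acts Sa and Se are isomorphic. -/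
open Set

universe u

/-- An element `a` of an `S`-act `A` is act-regular: there is an `S`-act homomorphism
`φ : Sa → S` (with `S` acting on itself by left multiplication) such that `φ(a) • a = a`.
The homomorphism on the cyclic subact `Sa = MulAction.orbit S a` is encoded as a total
function `A → S` whose behaviour is constrained only on the orbit. -/
def IsActRegular (S : Type u) [Monoid S] {A : Type u} [MulAction S A] (a : A) : Prop :=
  ∃ f : A → S,
    (∀ (s : S), ∀ x ∈ MulAction.orbit S a, f (s • x) = s * f x) ∧
    f a • a = a

/-- An `S`-act is regular if every element is act-regular. -/
def IsRegularAct (S : Type u) [Monoid S] (A : Type u) [MulAction S A] : Prop :=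
  ∀ a : A, IsActRegular S a

/-- The regular core `R` of the monoid `S`: the union of all regular subacts of `S`,
i.e. the set of `a ∈ S` such that every element of `Sa` is act-regular. -/
def regularCore (S : Type u) [Monoid S] : Set S :=
  {a : S | ∀ x ∈ MulAction.orbit S a, IsActRegular S x}

/-- The monoid `S` is regularly linearly ordered: for every `a` in the regular core,
the set of principal left ideals contained in `Sa` is linearly ordered by inclusion. -/
def RegularlyLinearlyOrdered (S : Type u) [Monoid S] : Prop :=
  ∀ a ∈ regularCore S, ∀ b c : S,
    MulAction.orbit S b ⊆ MulAction.orbit S a → MulAction.orbit S c ⊆ MulAction.orbit S a →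
    MulAction.orbit S b ⊆ MulAction.orbit S c ∨ MulAction.orbit S c ⊆ MulAction.orbit S b

/-- Proposition 2.1: characterizations of act-regular elements. (1) `a` is act-regular;
(2) there are an idempotent `e ∈ S` and an `S`-act isomorphism `ψ : Sa → Se` with `ψ(a) = e`;
(3) there is an idempotent `e ∈ S` with `Sa ≅ Se` as `S`-acts. -/
theorem isActRegular_tfae (S : Type u) [Monoid S] (A : Type u) [MulAction S A] (a : A) :
    List.TFAE
      [IsActRegular S a,
       ∃ e : S, IsIdempotentElem e ∧ ∃ g : A → S,
          (∀ (s : S), ∀ x ∈ MulAction.orbit S a, g (s • x) = s * g x) ∧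
          Set.BijOn g (MulAction.orbit S a) (MulAction.orbit S e) ∧ g a = e,
       ∃ e : S, IsIdempotentElem e ∧ ∃ g : A → S,
          (∀ (s : S), ∀ x ∈ MulAction.orbit S a, g (s • x) = s * g x) ∧
          Set.BijOn g (MulAction.orbit S a) (MulAction.orbit S e)] := by
  tfae_have 1 → 2 := by
    rintro ⟨f, hf, hfa⟩
    have haorb : a ∈ MulAction.orbit S a := ⟨1, one_smul _ _⟩
    have hea : f a • a = a := hfa
    have hidem : IsIdempotentElem (f a) := by
      have : f (f a • a) = f a * f a := hf (f a) a haorb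
      rw [hea] at this
      exact this.symm
    refine ⟨f a, hidem, f, hf, ⟨?_, ?_, ?_⟩, rfl⟩
    · rintro x ⟨s, rfl⟩
      exact ⟨s, by rw [hf s a haorb]; rfl⟩
    · rintro x ⟨s, rfl⟩ y ⟨t, rfl⟩ hxy
      rw [hf s a haorb, hf t a haorb] at hxy
      calc s • a = (s * f a) • a := by rw [mul_smul, hea]
        _ = (t * f a) • a := by rw [hxy]
        _ = t • a := by rw [mul_smul, hea]
    · rintro y ⟨s, rfl⟩
      exact ⟨s • a, ⟨s, rfl⟩, by rw [hf s a haorb]; rfl⟩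
  tfae_have 2 → 3 := by
    rintro ⟨e, he, g, hg, hbij, _⟩
    exact ⟨e, he, g, hg, hbij⟩
  tfae_have 3 → 1 := by
    rintro ⟨e, he, g, hg, hmaps, hinj, hsurj⟩
    have haorb : a ∈ MulAction.orbit S a := ⟨1, one_smul _ _⟩
    have heorb : e ∈ MulAction.orbit S e := ⟨1, one_smul _ _⟩
    obtain ⟨x, hx, hgx⟩ := hsurj heorb
    obtain ⟨u, hu⟩ := hx
    have hu' : u • a = x := hu
    have hx : x ∈ MulAction.orbit S a := ⟨u, hu⟩
    refine ⟨fun y => g y * u, ?_, ?_⟩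
    · intro s y hy
      show g (s • y) * u = s * (g y * u)
      rw [hg s y hy, mul_assoc]
    · show (g a * u) • a = a
      have key : (g a * u) • a = g a • x := by rw [mul_smul, hu']
      have hgax : g a • x ∈ MulAction.orbit S a := ⟨g a * u, key⟩
      have heq : g (g a • x) = g a := by
        rw [hg (g a) x hx, hgx]
        obtain ⟨w, hw⟩ := hmaps haorb
        have hw' : w • e = g a := hw
        rw [← hw', smul_eq_mul, mul_assoc, he]
      rw [key, hinj hgax haorb heq]
  tfae_finish
end

section
/- Let S be a monoid with regular core R. (1) If r ∈ R, e ∈ S is idempotent and rS = eS, then e ∈ R and rR = eR. (2) If e, f ∈ R are idempotents, then eS = fS if and only if eR = fR. -/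
open Set

universe u

/-- Proposition 2.4: (1) if `r ∈ R`, `e` is an idempotent of `S` and `rS = eS`, then `e ∈ R`
and `rR = eR`; (2) for idempotents `e, f ∈ R`, `eS = fS` if and only if `eR = fR`. -/
theorem regularCore_principal_right_ideals (S : Type u) [Monoid S]
    (hR : (regularCore S).Nonempty) :
    (∀ r ∈ regularCore S, ∀ e : S, IsIdempotentElem e →
        Set.range (fun s : S => r * s) = Set.range (fun s : S => e * s) →
        e ∈ regularCore S ∧
          (fun u => r * u) '' regularCore S = (fun u => e * u) '' regularCore S) ∧
    (∀ e ∈ regularCore S, ∀ f ∈ regularCore S, IsIdempotentElem e → IsIdempotentElem f →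
        (Set.range (fun s : S => e * s) = Set.range (fun s : S => f * s) ↔
          (fun u => e * u) '' regularCore S = (fun u => f * u) '' regularCore S)) := by
  classical
  -- R is closed under left multiplication
  have hideal : ∀ a ∈ regularCore S, ∀ s : S, s * a ∈ regularCore S := by
    intro a ha s x hx
    apply ha
    obtain ⟨t, ht⟩ := hx
    exact ⟨t * s, by simpa [smul_eq_mul, mul_assoc] using ht⟩
  -- one-sided inclusion for images of R
  have hsub : ∀ r e : S, (∃ c : S, e * c = r) →
      (fun u => r * u) '' regularCore S ⊆ (fun u => e * u) '' regularCore S := by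
    rintro r e ⟨c, hc⟩ _ ⟨u, hu, rfl⟩
    exact ⟨c * u, hideal u hu c, by simp [← hc, mul_assoc]⟩
  -- from range equality get divisibility both ways
  have hdiv : ∀ r e : S,
      Set.range (fun s : S => r * s) = Set.range (fun s : S => e * s) →
      (∃ c : S, e * c = r) ∧ (∃ d : S, r * d = e) := by
    intro r e h
    constructor
    · have : r ∈ Set.range (fun s : S => e * s) := by
        rw [← h]; exact ⟨1, by simp⟩
      exact this
    · have : e ∈ Set.range (fun s : S => r * s) := by
        rw [h]; exact ⟨1, by simp⟩
      exact this
  -- key : part (1) membership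
  have key : ∀ r ∈ regularCore S, ∀ e : S, IsIdempotentElem e →
      Set.range (fun s : S => r * s) = Set.range (fun s : S => e * s) →
      e ∈ regularCore S := by
    intro r hr e he hrs
    obtain ⟨⟨c, hc⟩, ⟨d, hd⟩⟩ := hdiv r e hrs
    have her : e * r = r := by
      rw [← hc, ← mul_assoc, he, hc]
    intro x hx
    obtain ⟨s, hs⟩ := hx
    have hs' : s * e = x := by simpa [smul_eq_mul] using hs
    obtain ⟨g, hg1, hg2⟩ := hr (s * r) ⟨s, rfl⟩
    have hg2' : g (s * r) * (s * r) = s * r := by simpa [smul_eq_mul] using hg2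
    have hxr : x * r = s * r := by
      rw [← hs', mul_assoc, her]
    have hxe : (s * r) * d = x := by
      rw [mul_assoc, hd, hs']
    refine ⟨fun y => g (y * r), ?_, ?_⟩
    · intro t y hy
      obtain ⟨t', ht'⟩ := hy
      have ht'' : t' * x = y := by simpa [smul_eq_mul] using ht'
      have hmem : y * r ∈ MulAction.orbit S (s * r) := by
        refine ⟨t', ?_⟩
        simp [smul_eq_mul, ← ht'', mul_assoc, hxr]
      have := hg1 t (y * r) hmem
      simpa [smul_eq_mul, mul_assoc] using this
    · show g (x * r) * x = x
      rw [hxr, ← hxe, ← mul_assoc, hg2']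
  refine ⟨?_, ?_⟩
  · intro r hr e he hrs
    obtain ⟨⟨c, hc⟩, ⟨d, hd⟩⟩ := hdiv r e hrs
    exact ⟨key r hr e he hrs,
      Set.Subset.antisymm (hsub r e ⟨c, hc⟩) (hsub e r ⟨d, hd⟩)⟩
  · intro e heR f hfR he hf
    constructor
    · intro h
      obtain ⟨⟨c, hc⟩, ⟨d, hd⟩⟩ := hdiv e f h
      exact Set.Subset.antisymm (hsub e f ⟨c, hc⟩) (hsub f e ⟨d, hd⟩)
    · intro h
      -- e = e * e ∈ eR = fR, so e = f * u with u ∈ R; symmetric.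
      have hef : ∃ u : S, f * u = e := by
        have : e ∈ (fun u => f * u) '' regularCore S := by
          rw [← h]; exact ⟨e, heR, he⟩
        obtain ⟨u, hu, huf⟩ := this
        exact ⟨u, huf⟩
      have hfe : ∃ v : S, e * v = f := by
        have : f ∈ (fun u => e * u) '' regularCore S := by
          rw [h]; exact ⟨f, hfR, hf⟩
        obtain ⟨v, hv, hvf⟩ := this
        exact ⟨v, hvf⟩
      obtain ⟨u, hu⟩ := hef
      obtain ⟨v, hv⟩ := hfe
      apply Set.Subset.antisymm
      · rintro _ ⟨t, rfl⟩
        exact ⟨u * t, by simp [← hu, mul_assoc]⟩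
      · rintro _ ⟨t, rfl⟩
        exact ⟨v * t, by simp [← hv, mul_assoc]⟩
end

section
/- Let S be a regularly linearly ordered monoid, A a regular left S-act and a ∈ A. Then the set {Sb | b ∈ Sa} of cyclic subacts of Sa is linearly ordered by inclusion: for all b₁, b₂ ∈ Sa, either Sb₁ ⊆ Sb₂ or Sb₂ ⊆ Sb₁. -/
open Set

universe u

/-- Proposition 2.5: if `S` is a regularly linearly ordered monoid, `A` a regular `S`-act and
`a ∈ A`, then the cyclic subacts of `Sa` are linearly ordered by inclusion. -/
theorem orbits_linearly_ordered_of_regularlyLinearlyOrdered (S : Type u) [Monoid S]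
    (hR : (regularCore S).Nonempty) (hlin : RegularlyLinearlyOrdered S)
    (A : Type u) [MulAction S A] (hA : IsRegularAct S A) (a : A) :
    ∀ b₁ ∈ MulAction.orbit S a, ∀ b₂ ∈ MulAction.orbit S a,
      MulAction.orbit S b₁ ⊆ MulAction.orbit S b₂ ∨
        MulAction.orbit S b₂ ⊆ MulAction.orbit S b₁ := by
  obtain ⟨f, hf, hfa⟩ := hA a
  set e : S := f a with he
  have mulsmul : ∀ (u v : S) (x : A), (u * v) • x = u • v • x := fun u v x => mul_smul u v x
  -- f of an orbit element
  have fval : ∀ s : S, f (s • a) = s * e := fun s =>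
    hf s a (MulAction.mem_orbit_self a)
  -- key: f b • a = b for every b in the orbit of a
  have key : ∀ b ∈ MulAction.orbit S a, f b • a = b := by
    rintro b ⟨s, rfl⟩
    rw [fval, mulsmul, hfa]
  -- e belongs to the regular core
  have hecore : e ∈ regularCore S := by
    rintro x ⟨s, hs⟩
    have hx : s * e = x := hs
    obtain ⟨h, hh, hhb⟩ := hA (s • a)
    have hxa : x • a = s • a := by rw [← hx, mulsmul, hfa]
    refine ⟨fun u => h (u • a), ?_, ?_⟩
    · intro t u hu
      obtain ⟨t', ht'⟩ := hu
      have ht' : t' * x = u := ht'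
      have hmem : u • a ∈ MulAction.orbit S (s • a) := by
        refine ⟨t', ?_⟩
        show t' • (s • a) = u • a
        rw [← ht', mulsmul, hxa]
      show h ((t * u) • a) = t * h (u • a)
      rw [mulsmul]
      exact hh t _ hmem
    · show h (x • a) * x = x
      rw [hxa]
      have h1 := hf (h (s • a)) (s • a) ⟨s, rfl⟩
      rw [hhb, fval, hx] at h1
      exact h1.symm
  -- orbits of f b are contained in orbit of e
  have sub_e : ∀ b ∈ MulAction.orbit S a,
      MulAction.orbit S (f b) ⊆ MulAction.orbit S e := by
    rintro b ⟨s, rfl⟩ y ⟨t, ht⟩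
    refine ⟨t * s, ?_⟩
    show t * s * e = y
    rw [mul_assoc, ← fval s]
    exact ht
  -- transfer: orbit inclusion in S gives orbit inclusion in A
  have transfer : ∀ b₁ ∈ MulAction.orbit S a, ∀ b₂ ∈ MulAction.orbit S a,
      MulAction.orbit S (f b₁) ⊆ MulAction.orbit S (f b₂) →
      MulAction.orbit S b₁ ⊆ MulAction.orbit S b₂ := by
    intro b₁ hb₁ b₂ hb₂ hsub
    obtain ⟨t, ht⟩ := hsub (MulAction.mem_orbit_self (f b₁))
    have hkey := key b₁ hb₁
    rw [← ht] at hkey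
    have hb : b₁ = t • b₂ := by
      rw [← hkey]
      show (t * f b₂) • a = t • b₂
      rw [mulsmul, key b₂ hb₂]
    rintro y ⟨u, hu⟩
    refine ⟨u * t, ?_⟩
    show (u * t) • b₂ = y
    rw [mulsmul, ← hb]
    exact hu
  intro b₁ hb₁ b₂ hb₂
  rcases hlin e hecore (f b₁) (f b₂) (sub_e b₁ hb₁) (sub_e b₂ hb₂) with h | h
  · exact Or.inl (transfer b₁ hb₁ b₂ hb₂ h)
  · exact Or.inr (transfer b₂ hb₂ b₁ hb₁ h)
end

section
/- Let S be a monoid with regular core R. The class ℜ of all regular left S-acts is axiomatizable if and only if: (1) there is no infinite strictly decreasing chain f₁S ⊋ f₂S ⊋ … of principal right ideals of S generated by idempotents f₁, f₂, … ∈ R (i.e., R satisfies the descending chain condition for principal right ideals generated by idempotents); and (2) for every n ≥ 1 and all s₁, …, sₙ, t₁, …, tₙ ∈ S, the set {x ∈ R | sᵢx = tᵢx for all 1 ≤ i ≤ n} is either empty or finitely generated as a right ideal of the semigroup R, i.e., equals r₁R ∪ … ∪ rₖR for some k ≥ 1 and r₁, …, rₖ ∈ R. -/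
open Set FirstOrder FirstOrder.Language

universe u

/-- The language `L_S` of `S`-acts: one unary function symbol for each element of `S`. -/
def actLanguage (S : Type u) : FirstOrder.Language.{u, 0} :=
  ⟨fun n => match n with
    | 1 => S
    | _ => PEmpty, fun _ => Empty⟩

/-- The canonical `actLanguage S`-structure on an `S`-act `A`: the symbol `s` is interpreted
as the map `x ↦ s • x`. -/
def actStructure (S : Type u) [Monoid S] (A : Type u) [MulAction S A] :
    (actLanguage S).Structure A where
  funMap {n} f x :=
    match n, f, x with
    | 0, f, _ => f.elim
    | 1, s, x => (show S from s) • x 0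
    | _ + 2, f, _ => f.elim
  RelMap {n} r _ := r.elim

/-- The class of all regular left `S`-acts is axiomatizable: there is a set of
`L_S`-sentences whose models are exactly the regular left `S`-acts. -/
def RegularClassAxiomatizable (S : Type u) [Monoid S] : Prop :=
  ∃ Ax : (actLanguage S).Theory,
    ∀ (A : Type u) (str : (actLanguage S).Structure A),
      (@FirstOrder.Language.Theory.Model (actLanguage S) A str Ax) ↔
        ∃ inst : MulAction S A, str = @actStructure S _ A inst ∧ @IsRegularAct S _ A inst

/-- The theory `Th(ℜ^∞)` of the class of all infinite regular left `S`-acts: all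
`L_S`-sentences true in every infinite regular `S`-act. -/
def regularTheory (S : Type u) [Monoid S] : (actLanguage S).Theory :=
  {φ | ∀ (A : Type u) (inst : MulAction S A), @IsRegularAct S _ A inst → Infinite A →
        @FirstOrder.Language.Sentence.Realize (actLanguage S) A (@actStructure S _ A inst) φ}

/-- A theory `T` is model complete: whenever `M` and `N` are models of `T` and `M` embeds in
`N`, the embedding is elementary. -/
def TheoryIsModelComplete {L : FirstOrder.Language.{u, 0}} (T : L.Theory) : Prop :=
  ∀ (M N : Type u) (sM : L.Structure M) (sN : L.Structure N),
    @FirstOrder.Language.Theory.Model L M sM T → @FirstOrder.Language.Theory.Model L N sN T →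
    ∀ (f : @FirstOrder.Language.Embedding L M N sM sN) (n : ℕ) (φ : L.Formula (Fin n))
      (x : Fin n → M),
      @FirstOrder.Language.Formula.Realize L N sN (Fin n) φ (fun i => f (x i)) ↔
        @FirstOrder.Language.Formula.Realize L M sM (Fin n) φ x

/-- The class of regular left `S`-acts is model complete: the theory of the class of infinite
regular `S`-acts is model complete. -/
def RegularClassModelComplete (S : Type u) [Monoid S] : Prop :=
  TheoryIsModelComplete (regularTheory S)

/-- The class of regular left `S`-acts is complete: the theory of the class of infinite
regular `S`-acts is consistent and decides every sentence. -/
def RegularClassComplete (S : Type u) [Monoid S] : Prop :=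
  (regularTheory S).IsSatisfiable ∧
    ∀ φ : (actLanguage S).Sentence, φ ∈ regularTheory S ∨ φ.not ∈ regularTheory S

section AuxRegular
variable {S : Type u} [Monoid S]

def actSym (s : S) : (actLanguage S).Functions 1 := s

example {A : Type u} [MulAction S A] (s : S) (x : Fin 1 → A) :
    @Structure.funMap _ A (actStructure S A) 1 (actSym s) x = s • x 0 := rfl

-- characterization lemma
theorem isActRegular_iff {A : Type u} [MulAction S A] (a : A) :
    IsActRegular S a ↔ ∃ e : S, (∀ s t : S, s • a = t • a → s * e = t * e) ∧ e • a = a := by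
  constructor
  · rintro ⟨f, hf, hfa⟩
    refine ⟨f a, fun s t hst => ?_, hfa⟩
    rw [← hf s a (MulAction.mem_orbit_self a), ← hf t a (MulAction.mem_orbit_self a), hst]
  · rintro ⟨e, he, hea⟩
    classical
    refine ⟨fun x => if h : x ∈ MulAction.orbit S a then
        (Classical.choose (MulAction.mem_orbit_iff.1 h)) * e else 1, fun s x hx => ?_, ?_⟩
    · have hsx : s • x ∈ MulAction.orbit S a := by
        obtain ⟨u, hu⟩ := MulAction.mem_orbit_iff.1 hx
        exact MulAction.mem_orbit_iff.2 ⟨s * u, by rw [mul_smul, hu]⟩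
      dsimp only
      rw [dif_pos hx, dif_pos hsx]
      have h1 := Classical.choose_spec (MulAction.mem_orbit_iff.1 hx)
      have h2 := Classical.choose_spec (MulAction.mem_orbit_iff.1 hsx)
      have : (Classical.choose (MulAction.mem_orbit_iff.1 hsx)) • a =
          (s * Classical.choose (MulAction.mem_orbit_iff.1 hx)) • a := by
        rw [h2, mul_smul, h1]
      rw [← mul_assoc]
      exact he _ _ this
    · have hself : a ∈ MulAction.orbit S a := MulAction.mem_orbit_self a
      dsimp only
      rw [dif_pos hself]
      have h1 := Classical.choose_spec (MulAction.mem_orbit_iff.1 hself)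
      have : (Classical.choose (MulAction.mem_orbit_iff.1 hself)) * e = 1 * e :=
        he _ _ (by rw [h1, one_smul])
      rw [this, one_mul, hea]


/-- An element with witness: derived facts. -/
theorem exists_witness {A : Type u} [MulAction S A] (a : A)
    (hreg : ∀ x ∈ MulAction.orbit S a, IsActRegular S x) :
    ∃ e : S, e ∈ regularCore S ∧ IsIdempotentElem e ∧
      (∀ s t : S, s • a = t • a ↔ s * e = t * e) ∧ e • a = a := by
  obtain ⟨e, he, hea⟩ := (isActRegular_iff a).1 (hreg a (MulAction.mem_orbit_self a))
  have hback : ∀ s t : S, s * e = t * e → s • a = t • a := by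
    intro s t h
    calc s • a = s • (e • a) := by rw [hea]
    _ = (s * e) • a := by rw [mul_smul]
    _ = (t * e) • a := by rw [h]
    _ = t • (e • a) := by rw [mul_smul]
    _ = t • a := by rw [hea]
  have hidem : IsIdempotentElem e := by
    have := he e 1 (by rw [hea, one_smul])
    rwa [one_mul] at this
  refine ⟨e, ?_, hidem, fun s t => ⟨he s t, hback s t⟩, hea⟩
  -- e ∈ regularCore S
  intro x hx
  obtain ⟨u, hu⟩ := MulAction.mem_orbit_iff.1 hx
  have hu' : u * e = x := by rw [← hu]; rfl
  obtain ⟨e', he', he'a⟩ := (isActRegular_iff (u • a)).1 (hreg (u • a) (MulAction.mem_orbit a u))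
  refine (isActRegular_iff x).2 ⟨e', fun p q hpq => ?_, ?_⟩
  · -- p • x = q • x → p * e' = q * e'
    have hpq' : (p * u) * e = (q * u) * e := by
      rw [mul_assoc, mul_assoc, hu']
      simpa using hpq
    have : p • (u • a) = q • (u • a) := by
      rw [← mul_smul, ← mul_smul]
      exact hback _ _ hpq'
    exact he' p q this
  · -- e' • x = x
    have h1 : (e' * u) • a = (1 * u) • a := by
      rw [one_mul, mul_smul]
      exact he'a
    have h2 : (e' * u) * e = (1 * u) * e := he _ _ h1
    have : e' * (u * e) = u * e := by
      rw [← mul_assoc, h2, one_mul]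
    rw [show (e' • x : S) = e' * x from rfl, ← hu', this]

/-- right-absorbing: b ∈ R implies a*b ∈ R for any a. -/
theorem mul_mem_regularCore (a : S) {b : S} (hb : b ∈ regularCore S) :
    a * b ∈ regularCore S := by
  intro x hx
  obtain ⟨u, hu⟩ := MulAction.mem_orbit_iff.1 hx
  apply hb x
  exact MulAction.mem_orbit_iff.2 ⟨u * a, by rw [← hu]; simp [smul_eq_mul, mul_assoc]⟩

/-- witness of an element of the regular core, in S itself. -/
theorem exists_witness_core {w : S} (hw : w ∈ regularCore S) :
    ∃ h : S, h ∈ regularCore S ∧ IsIdempotentElem h ∧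
      (∀ p q : S, p * w = q * w ↔ p * h = q * h) ∧ h * w = w := by
  obtain ⟨e, hcore, hidem, hker, hea⟩ := exists_witness (S := S) (A := S) w hw
  exact ⟨e, hcore, hidem, fun p q => by
    simpa [smul_eq_mul] using hker p q, by simpa [smul_eq_mul] using hea⟩


/-! ### Syntax -/

def appT (s : S) {n : ℕ} (t : (actLanguage S).Term (Empty ⊕ Fin n)) :
    (actLanguage S).Term (Empty ⊕ Fin n) :=
  Term.func (actSym s) ![t]

/-- semantic unary function of a symbol in an arbitrary structure -/
def fm {A : Type u} (str : (actLanguage S).Structure A) (s : S) (x : A) : A :=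
  @Structure.funMap _ A str 1 (actSym s) ![x]

theorem fm_actStructure {A : Type u} [inst : MulAction S A] (s : S) (x : A) :
    fm (actStructure S A) s x = s • x := rfl

theorem term_fm {A : Type u} (str : (actLanguage S).Structure A) (s : S) {n : ℕ}
    (t : (actLanguage S).Term (Empty ⊕ Fin n)) (v : Empty ⊕ Fin n → A) :
    @Term.realize _ A str _ v (appT s t) = fm str s (t.realize v) := by
  show @Structure.funMap _ A str 1 (actSym s) (fun i => Term.realize v (![t] i)) = _
  unfold fm
  congr 1
  funext i
  rw [Fin.fin_one_eq_zero i]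
  rfl

def assocAx (s t : S) : (actLanguage S).Sentence :=
  ∀' (appT s (appT t (&0)) =' appT (s * t) (&0))

def oneAx : (actLanguage S).Sentence :=
  ∀' (appT (1 : S) (&0) =' (&0))

def sysFml {n : ℕ} (s t : Fin n → S) : (actLanguage S).BoundedFormula Empty 1 :=
  (List.ofFn (fun i => (appT (s i) (&0) =' appT (t i) (&0)))).foldr (· ⊓ ·) ⊤

def emptyAx {n : ℕ} (s t : Fin n → S) : (actLanguage S).Sentence :=
  ∀' (sysFml s t ⟹ ⊥)

def genAx {n k : ℕ} (s t : Fin n → S) (w : Fin k → S) : (actLanguage S).Sentence :=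
  ∀' (sysFml s t ⟹
    (List.ofFn (fun j => (∃' ((&0) =' appT (w j) (&1))))).foldr (· ⊔ ·) ⊥)

section RealizeLemmas
variable {A : Type u} (str : (actLanguage S).Structure A)

theorem realize_assocAx (s t : S) :
    (@Sentence.Realize _ A str (assocAx s t)) ↔
    ∀ x : A, fm str s (fm str t x) = fm str (s * t) x := by
  rw [Sentence.Realize, assocAx, Formula.Realize, BoundedFormula.realize_all]
  refine forall_congr' fun x => ?_
  rw [BoundedFormula.realize_bdEqual, term_fm, term_fm, term_fm]
  rfl

theorem realize_oneAx :
    (@Sentence.Realize _ A str (oneAx : (actLanguage S).Sentence)) ↔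
    ∀ x : A, fm str 1 x = x := by
  rw [Sentence.Realize, oneAx, Formula.Realize, BoundedFormula.realize_all]
  refine forall_congr' fun x => ?_
  rw [BoundedFormula.realize_bdEqual, term_fm]
  rfl

theorem realize_sysFml {n : ℕ} (s t : Fin n → S) (v : Empty → A) (xs : Fin 1 → A) :
    (@BoundedFormula.Realize _ A str _ _ (sysFml s t) v xs) ↔
    ∀ i, fm str (s i) (xs 0) = fm str (t i) (xs 0) := by
  rw [sysFml, BoundedFormula.realize_foldr_inf]
  constructor
  · intro h i
    have := h _ (List.mem_ofFn.2 ⟨i, rfl⟩)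
    rw [BoundedFormula.realize_bdEqual, term_fm, term_fm] at this
    exact this
  · intro h φ hφ
    obtain ⟨i, rfl⟩ := List.mem_ofFn.1 hφ
    rw [BoundedFormula.realize_bdEqual, term_fm, term_fm]
    exact h i

theorem realize_emptyAx {n : ℕ} (s t : Fin n → S) :
    (@Sentence.Realize _ A str (emptyAx s t)) ↔
    ∀ x : A, ¬ (∀ i, fm str (s i) x = fm str (t i) x) := by
  rw [Sentence.Realize, emptyAx, Formula.Realize, BoundedFormula.realize_all]
  refine forall_congr' fun x => ?_
  rw [BoundedFormula.realize_imp, realize_sysFml]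
  rw [show (Fin.snoc (default : Fin 0 → A) x : Fin 1 → A) 0 = x from rfl]
  simp [BoundedFormula.realize_bot]

theorem realize_genAx {n k : ℕ} (s t : Fin n → S) (w : Fin k → S) :
    (@Sentence.Realize _ A str (genAx s t w)) ↔
    ∀ x : A, (∀ i, fm str (s i) x = fm str (t i) x) → ∃ j y, x = fm str (w j) y := by
  rw [Sentence.Realize, genAx, Formula.Realize, BoundedFormula.realize_all]
  refine forall_congr' fun x => ?_
  rw [BoundedFormula.realize_imp, realize_sysFml, BoundedFormula.realize_foldr_sup]
  refine imp_congr Iff.rfl ?_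
  constructor
  · rintro ⟨φ, hφ, hr⟩
    obtain ⟨j, rfl⟩ := List.mem_ofFn.1 hφ
    rw [BoundedFormula.realize_ex] at hr
    obtain ⟨y, hy⟩ := hr
    rw [BoundedFormula.realize_bdEqual, term_fm] at hy
    exact ⟨j, y, hy⟩
  · rintro ⟨j, y, hy⟩
    refine ⟨_, List.mem_ofFn.2 ⟨j, rfl⟩, ?_⟩
    rw [BoundedFormula.realize_ex]
    refine ⟨y, ?_⟩
    rw [BoundedFormula.realize_bdEqual, term_fm]
    exact hy

end RealizeLemmas


/-! ### Structures vs MulActions -/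

theorem funMap_fin1 {A : Type u} (str : (actLanguage S).Structure A)
    (f : (actLanguage S).Functions 1) (x : Fin 1 → A) :
    @Structure.funMap _ A str 1 f x = fm str f (x 0) := by
  unfold fm
  congr 1
  funext i
  rw [Fin.fin_one_eq_zero i]
  rfl

/-- Build a MulAction from the semantics of a structure satisfying the act axioms. -/
def mulActionOfFm {A : Type u} (str : (actLanguage S).Structure A)
    (hassoc : ∀ (s t : S) (x : A), fm str s (fm str t x) = fm str (s * t) x)
    (hone : ∀ x : A, fm str 1 x = x) : MulAction S A where
  smul s x := fm str s x
  one_smul := hone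
  mul_smul s t x := (hassoc s t x).symm

theorem str_eq_actStructure {A : Type u} (str : (actLanguage S).Structure A)
    (hassoc : ∀ (s t : S) (x : A), fm str s (fm str t x) = fm str (s * t) x)
    (hone : ∀ x : A, fm str 1 x = x) :
    str = @actStructure S _ A (mulActionOfFm str hassoc hone) := by
  letI := mulActionOfFm str hassoc hone
  rcases str with ⟨f1, r1⟩
  unfold actStructure
  congr 1
  · funext n g x
    rcases n with _ | n
    · exact g.elim
    rcases n with _ | n
    · exact funMap_fin1 ⟨f1, r1⟩ g x
    · exact g.elim
  · funext n g x
    exact g.elim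

/-! ### The axioms -/

def solSet {n : ℕ} (s t : Fin n → S) : Set S :=
  {x | x ∈ regularCore S ∧ ∀ i, s i * x = t i * x}

def regAxioms : (actLanguage S).Theory :=
  {φ | ∃ s t : S, φ = assocAx s t} ∪ {φ | φ = oneAx} ∪
  {φ | ∃ (n : ℕ) (s t : Fin (n + 1) → S), solSet s t = ∅ ∧ φ = emptyAx s t} ∪
  {φ | ∃ (n : ℕ) (s t : Fin (n + 1) → S) (k : ℕ) (w : Fin (k + 1) → S),
      (∀ j, w j ∈ regularCore S) ∧
      (solSet s t = ⋃ j, (fun u => w j * u) '' regularCore S) ∧ φ = genAx s t w}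

/-! ### every regular act models the axioms -/

theorem regular_models_axioms {A : Type u} [inst : MulAction S A]
    (hreg : IsRegularAct S A) :
    @Theory.Model (actLanguage S) A (actStructure S A) regAxioms := by
  letI : (actLanguage S).Structure A := actStructure S A
  rw [Theory.model_iff]
  intro φ hφ
  have horb : ∀ a : A, ∀ x ∈ MulAction.orbit S a, IsActRegular S x := fun a x _ => hreg x
  rcases hφ with ((h | h) | h) | h
  · obtain ⟨s, t, rfl⟩ := h
    rw [realize_assocAx]
    intro x
    rw [fm_actStructure, fm_actStructure, fm_actStructure, mul_smul]
  · rw [h, realize_oneAx]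
    intro x
    rw [fm_actStructure, one_smul]
  · obtain ⟨n, s, t, hsol, rfl⟩ := h
    rw [realize_emptyAx]
    intro x hx
    obtain ⟨e, hcore, _, hker, _⟩ := exists_witness (S := S) x (horb x)
    have : e ∈ solSet s t := ⟨hcore, fun i => (hker (s i) (t i)).1 (by
      have := hx i; rwa [fm_actStructure, fm_actStructure] at this)⟩
    rw [hsol] at this
    exact this
  · obtain ⟨n, s, t, k, w, hwR, hsol, rfl⟩ := h
    rw [realize_genAx]
    intro x hx
    obtain ⟨e, hcore, _, hker, hex⟩ := exists_witness (S := S) x (horb x)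
    have he : e ∈ solSet s t := ⟨hcore, fun i => (hker (s i) (t i)).1 (by
      have := hx i; rwa [fm_actStructure, fm_actStructure] at this)⟩
    rw [hsol] at he
    obtain ⟨j, r, _, hre⟩ := Set.mem_iUnion.1 he
    have hre' : w j * r = e := hre
    refine ⟨j, r • x, ?_⟩
    rw [fm_actStructure, ← mul_smul, hre', hex]

/-! ### minimality from DCC -/

theorem exists_minimal_idem
    (h1 : ¬∃ f : ℕ → S,
        (∀ k, f k ∈ regularCore S ∧ IsIdempotentElem (f k)) ∧
        (∀ k, Set.range (fun s : S => f (k + 1) * s) ⊂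
          Set.range (fun s : S => f k * s)))
    (E : Set S) (hE : ∀ e ∈ E, e ∈ regularCore S ∧ IsIdempotentElem e)
    (hne : E.Nonempty) :
    ∃ e ∈ E, ∀ e' ∈ E,
      Set.range (fun s : S => e' * s) ⊆ Set.range (fun s : S => e * s) →
      Set.range (fun s : S => e * s) ⊆ Set.range (fun s : S => e' * s) := by
  by_contra hmin
  push_neg at hmin
  choose! F hF1 hF2 hF3 using hmin
  obtain ⟨e₀, he₀⟩ := hne
  let g : ℕ → S := fun k => F^[k] e₀
  have hgE : ∀ k, g k ∈ E := by
    intro k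
    induction k with
    | zero => exact he₀
    | succ k ih =>
      have : g (k + 1) = F (g k) := Function.iterate_succ_apply' F k e₀
      rw [this]
      exact hF1 _ ih
  refine h1 ⟨g, fun k => hE _ (hgE k), fun k => ?_⟩
  have hgs : g (k + 1) = F (g k) := Function.iterate_succ_apply' F k e₀
  rw [Set.ssubset_iff_subset_ne]
  constructor
  · rw [hgs]; exact hF2 _ (hgE k)
  · intro hEq
    apply hF3 _ (hgE k)
    rw [← hgs, hEq]


/-! ### models of the axioms are regular acts -/

theorem model_regular {A : Type u} (str : (actLanguage S).Structure A)
    (hR : (regularCore S).Nonempty)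
    (h1 : ¬∃ f : ℕ → S,
        (∀ k, f k ∈ regularCore S ∧ IsIdempotentElem (f k)) ∧
        (∀ k, Set.range (fun s : S => f (k + 1) * s) ⊂
          Set.range (fun s : S => f k * s)))
    (h2 : ∀ (n : ℕ) (s t : Fin (n + 1) → S),
        solSet s t = ∅ ∨
        ∃ (k : ℕ) (w : Fin (k + 1) → S), (∀ i, w i ∈ regularCore S) ∧
          solSet s t = ⋃ i, (fun u => w i * u) '' regularCore S)
    (hM : @Theory.Model (actLanguage S) A str regAxioms) :
    ∃ inst : MulAction S A, str = @actStructure S _ A inst ∧ @IsRegularAct S _ A inst := by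
  letI : (actLanguage S).Structure A := str
  rw [Theory.model_iff] at hM
  have hassoc : ∀ (s t : S) (x : A), fm str s (fm str t x) = fm str (s * t) x := by
    intro s t
    exact (realize_assocAx str s t).1
      (hM _ (Or.inl (Or.inl (Or.inl ⟨s, t, rfl⟩))))
  have hone : ∀ x : A, fm str 1 x = x :=
    (realize_oneAx str).1 (hM _ (Or.inl (Or.inl (Or.inr rfl))))
  refine ⟨mulActionOfFm str hassoc hone, str_eq_actStructure str hassoc hone, ?_⟩
  letI instA := mulActionOfFm str hassoc hone
  -- every element admits an idempotent from the regular core fixing it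
  have hE : ∀ b : A, ∃ h : S, h ∈ regularCore S ∧ IsIdempotentElem h ∧ fm str h b = b := by
    intro b
    rcases h2 0 (fun _ => 1) (fun _ => 1) with hsol | ⟨k, w, hwR, hsol⟩
    · exfalso
      obtain ⟨x₀, hx₀⟩ := hR
      have : x₀ ∈ solSet (fun _ : Fin 1 => (1 : S)) (fun _ => (1 : S)) := ⟨hx₀, fun _ => rfl⟩
      rw [hsol] at this
      exact this
    · have hmem : genAx (fun _ : Fin 1 => (1 : S)) (fun _ => (1 : S)) w ∈ regAxioms :=
        Or.inr ⟨0, _, _, k, w, hwR, hsol, rfl⟩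
      obtain ⟨j, y, hy⟩ := (realize_genAx str _ _ w).1 (hM _ hmem) b (fun _ => rfl)
      obtain ⟨h, hcore, hidem, _, hhw⟩ := exists_witness_core (hwR j)
      refine ⟨h, hcore, hidem, ?_⟩
      rw [hy, hassoc, hhw]
  intro a
  -- the set of idempotents in the core fixing a
  set E : Set S := {e | e ∈ regularCore S ∧ IsIdempotentElem e ∧ fm str e a = a} with hEdef
  have hEprop : ∀ e ∈ E, e ∈ regularCore S ∧ IsIdempotentElem e := fun e he => ⟨he.1, he.2.1⟩
  have hEne : E.Nonempty := by
    obtain ⟨h, hc, hi, hf⟩ := hE a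
    exact ⟨h, hc, hi, hf⟩
  obtain ⟨e, heE, hmin⟩ := exists_minimal_idem h1 E hEprop hEne
  rw [isActRegular_iff]
  refine ⟨e, ?_, heE.2.2⟩
  intro s t hst
  have hst' : fm str s a = fm str t a := hst
  by_contra hne
  rcases h2 1 ![s, e] ![t, 1] with hsol | ⟨k, w, hwR, hsol⟩
  · have hmem : emptyAx ![s, e] ![t, 1] ∈ regAxioms :=
      Or.inl (Or.inr ⟨1, _, _, hsol, rfl⟩)
    refine (realize_emptyAx str _ _).1 (hM _ hmem) a ?_
    intro i
    match i with
    | 0 => exact hst'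
    | 1 =>
      show fm str e a = fm str 1 a
      rw [heE.2.2, hone]
  · have hmem : genAx ![s, e] ![t, 1] w ∈ regAxioms :=
      Or.inr ⟨1, _, _, k, w, hwR, hsol, rfl⟩
    have hpre : ∀ i, fm str (![s, e] i) a = fm str (![t, 1] i) a := by
      intro i
      match i with
      | 0 => exact hst'
      | 1 => show fm str e a = fm str 1 a; rw [heE.2.2, hone]
    obtain ⟨j, y, hy⟩ := (realize_genAx str _ _ w).1 (hM _ hmem) a hpre
    obtain ⟨g, hgR, _, hgy⟩ := hE y
    have hd : w j * g ∈ solSet ![s, e] ![t, 1] := by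
      rw [hsol]
      exact Set.mem_iUnion.2 ⟨j, g, hgR, rfl⟩
    obtain ⟨hdR, hdi⟩ := hd
    have hd0 : s * (w j * g) = t * (w j * g) := by
      have := hdi 0; simpa using this
    have hd1 : e * (w j * g) = w j * g := by
      have := hdi 1; simpa using this
    have ha : a = fm str (w j * g) y := by
      rw [← hassoc (w j) g y, hgy]
      exact hy
    obtain ⟨h, hhR, hhidem, hker, hhd⟩ := exists_witness_core hdR
    have hhE : h ∈ E := by
      refine ⟨hhR, hhidem, ?_⟩
      rw [ha, hassoc, hhd]
    have heh : e * h = h := by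
      have := (hker e 1).1 (by rw [one_mul]; exact hd1)
      rwa [one_mul] at this
    have hsub : Set.range (fun u : S => h * u) ⊆ Set.range (fun u : S => e * u) := by
      rintro z ⟨u, rfl⟩
      exact ⟨h * u, by show e * (h * u) = h * u; rw [← mul_assoc, heh]⟩
    have hsub2 := hmin h hhE hsub
    have he_mem : e ∈ Set.range (fun u : S => e * u) := ⟨e, heE.2.1⟩
    obtain ⟨u, hu⟩ := hsub2 he_mem
    have hu' : h * u = e := hu
    have hsh : s * h = t * h := (hker s t).1 hd0
    apply hne
    calc s * e = s * (h * u) := by rw [hu']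
    _ = (s * h) * u := by rw [mul_assoc]
    _ = (t * h) * u := by rw [hsh]
    _ = t * (h * u) := by rw [mul_assoc]
    _ = t * e := by rw [hu']


/-! ### the orbit subact -/

def orbitAct (d : S) : MulAction S (↥(MulAction.orbit S d)) where
  smul s x := ⟨s • x.1, by
    obtain ⟨u, hu⟩ := MulAction.mem_orbit_iff.1 x.2
    exact MulAction.mem_orbit_iff.2 ⟨s * u, by rw [mul_smul, hu]⟩⟩
  one_smul x := Subtype.ext (one_smul S x.1)
  mul_smul s t x := Subtype.ext (mul_smul s t x.1)

theorem orbitAct_smul_val (d : S) (s : S) (x : ↥(MulAction.orbit S d)) :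
    ((@HSMul.hSMul S _ _ (@instHSMul S _ ((orbitAct d).toSMul)) s x : ↥(MulAction.orbit S d)) : S) = s * x.1 := rfl

theorem isRegularAct_orbit {d : S} (hd : d ∈ regularCore S) :
    @IsRegularAct S _ (↥(MulAction.orbit S d)) (orbitAct d) := by
  letI := orbitAct d
  intro x
  rw [isActRegular_iff]
  obtain ⟨e, he, hex⟩ := (isActRegular_iff (x.1)).1 (hd x.1 x.2)
  refine ⟨e, fun s t hst => he s t ?_, ?_⟩
  · exact congrArg Subtype.val hst
  · exact Subtype.ext hex


/-! ### ultraproduct argument -/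

theorem ultra_witness (Ax : (actLanguage S).Theory)
    (hAx : ∀ (A : Type u) (str : (actLanguage S).Structure A),
      (@FirstOrder.Language.Theory.Model (actLanguage S) A str Ax) ↔
        ∃ inst : MulAction S A, str = @actStructure S _ A inst ∧ @IsRegularAct S _ A inst)
    {ι : Type u} (U : Ultrafilter ι) (dd : ι → S) (hdd : ∀ i, dd i ∈ regularCore S) :
    ∃ e : S, e ∈ regularCore S ∧ IsIdempotentElem e ∧
      (∀ s t : S, (∀ᶠ i in (U : Filter ι), s * dd i = t * dd i) ↔ s * e = t * e) ∧
      (∀ᶠ i in (U : Filter ι), e * dd i = dd i) := by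
  classical
  let M : ι → Type u := fun i => ↥(MulAction.orbit S (dd i))
  letI instM : ∀ i, MulAction S (M i) := fun i => orbitAct (dd i)
  letI strM : ∀ i, (actLanguage S).Structure (M i) := fun i => actStructure S (M i)
  haveI hne : ∀ i, Nonempty (M i) := fun i => ⟨⟨dd i, MulAction.mem_orbit_self _⟩⟩
  have hfactor : ∀ i, @FirstOrder.Language.Theory.Model (actLanguage S) (M i) (strM i) Ax :=
    fun i => (hAx (M i) (strM i)).2 ⟨instM i, rfl, isRegularAct_orbit (hdd i)⟩
  have hP : @FirstOrder.Language.Theory.Model (actLanguage S) ((U : Filter ι).Product M)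
      (Ultraproduct.structure) Ax := by
    rw [Theory.model_iff]
    intro φ hφ
    rw [Ultraproduct.sentence_realize]
    exact Filter.Eventually.of_forall fun i => (hfactor i).realize_of_mem φ hφ
  obtain ⟨instP, hstr, hregP⟩ := (hAx ((U : Filter ι).Product M) _).1 hP
  letI := instP
  letI : MulAction S (Quotient ((U : Filter ι).productSetoid M)) := instP
  -- smul on the product computes componentwise
  have hsmul : ∀ (s : S) (h : ∀ i, M i),
      s • (↑h : ((U : Filter ι).Product M)) = (↑(fun i => s • h i) : ((U : Filter ι).Product M)) := by
    intro s h
    have h1 : s • (↑h : ((U : Filter ι).Product M)) = @Structure.funMap _ ((U : Filter ι).Product M) (actStructure S ((U : Filter ι).Product M)) 1 (actSym s) ![↑h] := rfl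
    rw [h1, ← hstr]
    have h2 : ![(↑h : ((U : Filter ι).Product M))] = fun i : Fin 1 => (↑(![h] i : ∀ a, M a) : ((U : Filter ι).Product M)) := by
      funext i
      rw [Fin.fin_one_eq_zero i]
      rfl
    erw [h2, Ultraproduct.funMap_cast]
    rfl
  have heq : ∀ (h k : ∀ i, M i), (↑h : ((U : Filter ι).Product M)) = (↑k : ((U : Filter ι).Product M)) ↔ ∀ᶠ i in (U : Filter ι), h i = k i :=
    fun h k => Quotient.eq''
  let g : ∀ i, M i := fun i => ⟨dd i, MulAction.mem_orbit_self _⟩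
  let a : ((U : Filter ι).Product M) := ↑g
  obtain ⟨e, hcore, hidem, hker, hea⟩ :=
    exists_witness (S := S) (A := ((U : Filter ι).Product M)) a (fun x _ => hregP x)
  refine ⟨e, hcore, hidem, fun s t => ?_, ?_⟩
  · constructor
    · intro hev
      refine (hker s t).1 ?_
      show s • a = t • a
      erw [hsmul, hsmul, heq]
      filter_upwards [hev] with i hi
      exact Subtype.ext hi
    · intro hst
      have : s • a = t • a := (hker s t).2 hst
      erw [hsmul, hsmul, heq] at this
      filter_upwards [this] with i hi
      exact congrArg Subtype.val hi
  · have : e • a = a := hea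
    erw [show a = (↑g : ((U : Filter ι).Product M)) from rfl, hsmul, heq] at this
    filter_upwards [this] with i hi
    exact congrArg Subtype.val hi


theorem condition1_of_axiomatizable (Ax : (actLanguage S).Theory)
    (hAx : ∀ (A : Type u) (str : (actLanguage S).Structure A),
      (@FirstOrder.Language.Theory.Model (actLanguage S) A str Ax) ↔
        ∃ inst : MulAction S A, str = @actStructure S _ A inst ∧ @IsRegularAct S _ A inst) :
    ¬∃ f : ℕ → S,
      (∀ k, f k ∈ regularCore S ∧ IsIdempotentElem (f k)) ∧
      (∀ k, Set.range (fun s : S => f (k + 1) * s) ⊂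
        Set.range (fun s : S => f k * s)) := by
  rintro ⟨f, hf, hchain⟩
  have hsub : ∀ m k, m ≤ k →
      Set.range (fun s : S => f k * s) ⊆ Set.range (fun s : S => f m * s) := by
    intro m k hmk
    induction k, hmk using Nat.le_induction with
    | base => exact subset_rfl
    | succ k hmk ih => exact subset_trans (hchain k).subset ih
  have hmf : ∀ m k, m ≤ k → f m * f k = f k := by
    intro m k hmk
    obtain ⟨v, hv⟩ := hsub m k hmk ⟨f k, (hf k).2⟩
    have hv' : f m * v = f k := hv
    rw [← hv', ← mul_assoc, (hf m).2]
  obtain ⟨e, _, _, hker, hev⟩ := ultra_witness Ax hAx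
    (Filter.hyperfilter (ULift.{u} ℕ)) (fun i => f i.down) (fun i => (hf i.down).1)
  have hme : ∀ m, f m * e = e := by
    intro m
    have hm : ∀ᶠ i in (Filter.hyperfilter (ULift.{u} ℕ) : Filter (ULift.{u} ℕ)),
        f m * f i.down = 1 * f i.down := by
      have hfin : {i : ULift.{u} ℕ | ¬ m ≤ i.down}.Finite := by
        have : {i : ULift.{u} ℕ | ¬ m ≤ i.down} = ULift.down ⁻¹' (Set.Iio m) := by
          ext i; simp only [Set.mem_setOf_eq, Set.mem_preimage, Set.mem_Iio, not_le]
        rw [this]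
        exact Set.Finite.preimage (Function.Injective.injOn ULift.down_injective)
          (Set.finite_Iio m)
      have hmem : {i : ULift.{u} ℕ | m ≤ i.down} ∈
          (Filter.hyperfilter (ULift.{u} ℕ) : Filter (ULift.{u} ℕ)) := by
        apply Filter.hyperfilter_le_cofinite
        rw [Filter.mem_cofinite]
        convert hfin using 1
        rfl
      filter_upwards [hmem] with i hi
      rw [one_mul, hmf m i.down hi]
    have := (hker (f m) 1).1 hm
    rwa [one_mul] at this
  obtain ⟨i0, hi0⟩ := hev.exists
  have hsub2 : Set.range (fun s : S => f i0.down * s) ⊆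
      Set.range (fun s : S => f (i0.down + 1) * s) := by
    rintro z ⟨v, rfl⟩
    refine ⟨e * (f i0.down * v), ?_⟩
    show f (i0.down + 1) * (e * (f i0.down * v)) = f i0.down * v
    rw [← mul_assoc, hme (i0.down + 1), ← mul_assoc, hi0]
  exact (hchain i0.down).ne (Set.Subset.antisymm (hchain i0.down).subset hsub2)

theorem finset_enum (E : Finset S) (hne : E.Nonempty) :
    ∃ (k : ℕ) (w : Fin (k + 1) → S), (∀ i, w i ∈ E) ∧ ∀ e ∈ E, ∃ i, w i = e := by
  classical
  have hlne : E.toList ≠ [] := by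
    intro h
    rw [Finset.toList_eq_nil] at h
    exact hne.ne_empty h
  have hpos : 0 < E.toList.length := List.length_pos_iff.2 hlne
  have hk : E.toList.length - 1 + 1 = E.toList.length := Nat.succ_pred_eq_of_pos hpos
  refine ⟨E.toList.length - 1, fun i => E.toList.get (Fin.cast hk i), fun i => ?_, fun e he => ?_⟩
  · rw [← Finset.mem_toList]
    exact List.get_mem _ _
  · rw [← Finset.mem_toList, List.mem_iff_get] at he
    obtain ⟨m, hm⟩ := he
    exact ⟨Fin.cast hk.symm m, by simpa using hm⟩


theorem condition2_of_axiomatizable (Ax : (actLanguage S).Theory)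
    (hAx : ∀ (A : Type u) (str : (actLanguage S).Structure A),
      (@FirstOrder.Language.Theory.Model (actLanguage S) A str Ax) ↔
        ∃ inst : MulAction S A, str = @actStructure S _ A inst ∧ @IsRegularAct S _ A inst)
    (n : ℕ) (s t : Fin (n + 1) → S) :
    solSet s t = ∅ ∨
      ∃ (k : ℕ) (w : Fin (k + 1) → S), (∀ i, w i ∈ regularCore S) ∧
        solSet s t = ⋃ i, (fun u => w i * u) '' regularCore S := by
  classical
  by_cases hempty : solSet s t = ∅
  · exact Or.inl hempty
  right
  by_contra hnfg
  push_neg at hnfg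
  set D := solSet s t with hD
  have hDne : D.Nonempty := Set.nonempty_iff_ne_empty.2 hempty
  have hDR : D ⊆ regularCore S := fun x hx => hx.1
  have hDright : ∀ d ∈ D, ∀ r ∈ regularCore S, d * r ∈ D := by
    intro d hd r hr
    exact ⟨mul_mem_regularCore d hr, fun i => by rw [← mul_assoc, hd.2 i, mul_assoc]⟩
  -- base sets are nonempty
  have hbase : ∀ (E : Finset S), ↑E ⊆ D →
      (D \ ⋃ e ∈ E, (fun u => e * u) '' regularCore S).Nonempty := by
    intro E hE
    by_contra hem
    rw [Set.not_nonempty_iff_eq_empty, Set.diff_eq_empty] at hem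
    rcases E.eq_empty_or_nonempty with rfl | hEne
    · obtain ⟨x, hx⟩ := hDne
      have := hem hx
      simp at this
    · obtain ⟨k, w, hwE, hwsurj⟩ := finset_enum E hEne
      refine hnfg k w (fun i => hDR (hE (hwE i))) ?_
      apply Set.Subset.antisymm
      · intro z hz
        obtain ⟨e, he, r, hr, hre⟩ := by
          have := hem hz
          simpa using this
        exact Set.mem_iUnion.2 ⟨(hwsurj e he).choose, r, hr, by
          rw [(hwsurj e he).choose_spec]; exact hre⟩
      · intro z hz
        obtain ⟨i, r, hr, hre⟩ := by simpa using hz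
        rw [← hre]
        exact hDright (w i) (hE (hwE i)) r hr
  -- an ultrafilter containing all base sets
  have hcond : ∀ T : Finset (Set ↥D),
      (↑T : Set (Set ↥D)) ⊆ {A | ∃ E : Finset S, ↑E ⊆ D ∧
        A = {d : ↥D | (d : S) ∈ D \ ⋃ e ∈ E, (fun u => e * u) '' regularCore S}} →
      (⋂₀ (↑T : Set (Set ↥D))).Nonempty := by
    intro T hT
    have hsel : ∀ A ∈ T, ∃ E : Finset S, ↑E ⊆ D ∧
        A = {d : ↥D | (d : S) ∈ D \ ⋃ e ∈ E, (fun u => e * u) '' regularCore S} :=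
      fun A hA => hT hA
    choose! F hF1 hF2 using hsel
    set E' : Finset S := T.biUnion F with hE'
    have hE'D : ↑E' ⊆ D := by
      intro x hx
      rw [hE', Finset.coe_biUnion] at hx
      obtain ⟨A, hA, hxA⟩ := by simpa using hx
      exact hF1 A hA hxA
    obtain ⟨d, hd⟩ := hbase E' hE'D
    refine ⟨⟨d, hd.1⟩, ?_⟩
    rw [Set.mem_sInter]
    intro A hA
    have hAT : A ∈ T := hA
    rw [hF2 A hAT]
    refine Set.mem_setOf_eq ▸ ⟨hd.1, ?_⟩
    intro hmem
    apply hd.2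
    obtain ⟨e, he, hmem2⟩ := by simpa using hmem
    have : e ∈ E' := by
      rw [hE']
      exact Finset.mem_biUnion.2 ⟨A, hAT, he⟩
    simp only [Set.mem_iUnion]
    exact ⟨e, this, hmem2⟩
  obtain ⟨U, hU⟩ := Ultrafilter.exists_ultrafilter_of_finite_inter_nonempty
    (α := ↥D)
    {A | ∃ E : Finset S, ↑E ⊆ D ∧
      A = {d : ↥D | (d : S) ∈ D \ ⋃ e ∈ E, (fun u => e * u) '' regularCore S}}
    hcond
  -- apply the ultraproduct
  obtain ⟨e, hcore, hidem, hker, hev⟩ := ultra_witness Ax hAx U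
    (fun d : ↥D => (d : S)) (fun d => hDR d.2)
  have hsie : ∀ i, s i * e = t i * e := fun i =>
    (hker (s i) (t i)).1 (Filter.Eventually.of_forall fun d => d.2.2 i)
  have heD : e ∈ D := ⟨hcore, hsie⟩
  have hBe : {d : ↥D | (d : S) ∈ D \ ⋃ e' ∈ ({e} : Finset S),
      (fun u => e' * u) '' regularCore S} ∈ U :=
    hU ⟨({e} : Finset S), by simpa using heD, rfl⟩
  have hfix : {d : ↥D | e * (d : S) = (d : S)} ∈ (U : Filter ↥D) := hev
  obtain ⟨d, hd1, hd2⟩ := Filter.nonempty_of_mem (Filter.inter_mem hfix hBe)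
  apply hd2.2
  simp only [Set.mem_iUnion]
  refine ⟨e, by simp, (d : S), hDR d.2, ?_⟩
  exact hd1

end AuxRegular

/-- Theorem 4.1: the class of all regular left `S`-acts is axiomatizable iff (1) `R` satisfies
the descending chain condition for principal right ideals generated by idempotents, and
(2) every solution set `{x ∈ R | s₁x = t₁x ∧ … ∧ sₙx = tₙx}` is empty or finitely generated
as a right ideal of the semigroup `R`. -/
theorem regularClassAxiomatizable_iff (S : Type u) [Monoid S]
    (hR : (regularCore S).Nonempty) :
    RegularClassAxiomatizable S ↔
      ((¬ ∃ f : ℕ → S,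
          (∀ k, f k ∈ regularCore S ∧ IsIdempotentElem (f k)) ∧
          (∀ k, Set.range (fun s : S => f (k + 1) * s) ⊂
            Set.range (fun s : S => f k * s))) ∧
       (∀ (n : ℕ) (s t : Fin (n + 1) → S),
          {x | x ∈ regularCore S ∧ ∀ i, s i * x = t i * x} = ∅ ∨
          ∃ (k : ℕ) (r : Fin (k + 1) → S), (∀ i, r i ∈ regularCore S) ∧
            {x | x ∈ regularCore S ∧ ∀ i, s i * x = t i * x} =
              ⋃ i, (fun u => r i * u) '' regularCore S)) := by
  constructor
  · rintro ⟨Ax, hAx⟩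
    exact ⟨condition1_of_axiomatizable Ax hAx,
      fun n s t => condition2_of_axiomatizable Ax hAx n s t⟩
  · rintro ⟨h1, h2⟩
    refine ⟨regAxioms, fun A str =>
      ⟨fun hM => model_regular str hR h1 h2 hM, ?_⟩⟩
    rintro ⟨inst, rfl, hreg⟩
    exact @regular_models_axioms S _ A inst hreg
end

section
/- Let S be a regularly linearly ordered monoid, let B be a subact of a regular left S-act A, and let a₁, …, aₖ ∈ A. Then for every i with 1 ≤ i ≤ k: (1) the intersection ⋂{Saⱼ | 1 ≤ j ≤ k, Saⱼ ∩ Saᵢ ≠ ∅} is nonempty; (2) if Saᵢ ∩ B ≠ ∅, then B ∩ ⋂{Saⱼ | 1 ≤ j ≤ k, Saⱼ ∩ Saᵢ ≠ ∅} ≠ ∅. -/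
open Set

universe u

/-- The orbit of an element of an orbit is contained in the orbit. -/
lemma orbit_subset_of_mem' {S : Type u} [Monoid S] {A : Type u} [MulAction S A]
    {c a : A} (h : c ∈ MulAction.orbit S a) :
    MulAction.orbit S c ⊆ MulAction.orbit S a := by
  obtain ⟨s, rfl⟩ := h
  rintro x ⟨u, rfl⟩
  exact ⟨u * s, (smul_smul u s a).symm⟩

/-- A finite nonempty set on which a transitive relation is total has a minimum. -/
lemma exists_min' {α : Type u} (r : α → α → Prop) (hr : Transitive r)
    (T : Finset α) (hT : T.Nonempty)
    (htot : ∀ c ∈ T, ∀ d ∈ T, r c d ∨ r d c) :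
    ∃ m ∈ T, ∀ y ∈ T, r m y := by
  classical
  induction T using Finset.induction_on with
  | empty => exact absurd hT (by simp)
  | @insert x T hx ih =>
    rcases T.eq_empty_or_nonempty with rfl | hT'
    · refine ⟨x, by simp, ?_⟩
      intro z hz
      have hzx : z = x := by simpa using hz
      subst hzx
      rcases htot z (by simp) z (by simp) with h | h <;> exact h
    · obtain ⟨m, hm, hmin⟩ := ih hT' (fun c hc d hd =>
        htot c (Finset.mem_insert_of_mem hc) d (Finset.mem_insert_of_mem hd))
      rcases htot x (Finset.mem_insert_self x T) m (Finset.mem_insert_of_mem hm) with h | h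
      · refine ⟨x, Finset.mem_insert_self x T, ?_⟩
        intro z hz
        rcases Finset.mem_insert.1 hz with rfl | hz
        · rcases htot z (Finset.mem_insert_self z T) z (Finset.mem_insert_self z T)
            with h' | h' <;> exact h'
        · exact hr h (hmin z hz)
      · refine ⟨m, Finset.mem_insert_of_mem hm, ?_⟩
        intro z hz
        rcases Finset.mem_insert.1 hz with rfl | hz
        · exact h
        · exact hmin z hz

/-- In a regular act over a regularly linearly ordered monoid, the principal subacts
of a cyclic subact `Sa` are linearly ordered by inclusion. -/
lemma orbit_lin {S : Type u} [Monoid S] {A : Type u} [MulAction S A]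
    (hlin : RegularlyLinearlyOrdered S) (hA : IsRegularAct S A) (a : A)
    {c d : A} (hc : c ∈ MulAction.orbit S a) (hd : d ∈ MulAction.orbit S a) :
    MulAction.orbit S c ⊆ MulAction.orbit S d ∨ MulAction.orbit S d ⊆ MulAction.orbit S c := by
  obtain ⟨f, hf, hfa⟩ := hA a
  set e := f a with he_def
  have hea : e • a = a := hfa
  have hmula : ∀ (p q : S), (p * (q * e)) • a = p • (q • a) := fun p q => by
    rw [mul_smul, mul_smul, hea]
  -- `e = f a` belongs to the regular core of `S`
  have he : e ∈ regularCore S := by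
    intro x hx
    obtain ⟨s, rfl⟩ := hx
    obtain ⟨g, hg, hga⟩ := hA (s • a)
    refine ⟨fun u => g (u • a), ?_, ?_⟩
    · intro t u hu
      obtain ⟨r, rfl⟩ := hu
      dsimp only
      simp only [smul_eq_mul]
      have hta : (t * (r * (s * e))) • a = t • ((r * (s * e)) • a) := mul_smul _ _ _
      rw [hta, hmula r s]
      exact hg t _ ⟨r, rfl⟩
    · dsimp only
      simp only [smul_eq_mul]
      have h1 : (s * e) • a = s • a := by rw [mul_smul, hea]
      rw [h1]
      have h3 := hf (g (s • a)) (s • a) ⟨s, rfl⟩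
      rw [hga] at h3
      have h4 := hf s a (MulAction.mem_orbit_self a)
      rw [h4] at h3
      exact h3.symm
  obtain ⟨s, rfl⟩ := hc
  obtain ⟨t, rfl⟩ := hd
  -- transfer inclusions of principal ideals of `S` back to the act `A`
  have transfer : ∀ u v : S,
      MulAction.orbit S (u * e) ⊆ MulAction.orbit S (v * e) →
      MulAction.orbit S (u • a) ⊆ MulAction.orbit S (v • a) := by
    intro u v hsub
    rintro x ⟨w, rfl⟩
    obtain ⟨z, hz⟩ := hsub ⟨w, rfl⟩
    simp only [smul_eq_mul] at hz
    refine ⟨z, ?_⟩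
    show z • (v • a) = w • (u • a)
    rw [← hmula z v, hz, hmula w u]
  have hsube : ∀ u : S, MulAction.orbit S (u * e) ⊆ MulAction.orbit S e :=
    fun u => orbit_subset_of_mem' ⟨u, rfl⟩
  rcases hlin e he (s * e) (t * e) (hsube s) (hsube t) with h | h
  · exact Or.inl (transfer s t h)
  · exact Or.inr (transfer t s h)

/-- Lemma 5.1: let `S` be a regularly linearly ordered monoid, `B` a subact of a regular
`S`-act `A`, and `a₁, …, a_k ∈ A`. Then for each `i`: (1) the intersection of the `Sa_j`
with `Sa_j ∩ Sa_i ≠ ∅` is nonempty; (2) if `Sa_i ∩ B ≠ ∅`, then `B` meets that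
intersection. -/
theorem orbit_intersections_nonempty (S : Type u) [Monoid S]
    (hR : (regularCore S).Nonempty) (hlin : RegularlyLinearlyOrdered S)
    (A : Type u) [MulAction S A] (hA : IsRegularAct S A)
    (B : Set A) (hB : ∀ (s : S), ∀ b ∈ B, s • b ∈ B)
    (k : ℕ) (a : Fin k → A) (i : Fin k) :
    (⋂ j ∈ {j : Fin k | (MulAction.orbit S (a j) ∩ MulAction.orbit S (a i)).Nonempty},
        MulAction.orbit S (a j)).Nonempty ∧
    ((MulAction.orbit S (a i) ∩ B).Nonempty →
      (B ∩ ⋂ j ∈ {j : Fin k | (MulAction.orbit S (a j) ∩ MulAction.orbit S (a i)).Nonempty},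
          MulAction.orbit S (a j)).Nonempty) := by
  classical
  set J := {j : Fin k | (MulAction.orbit S (a j) ∩ MulAction.orbit S (a i)).Nonempty} with hJ
  -- main claim: for any b ∈ Sa_i there is x ∈ Sb belonging to all the Sa_j, j ∈ J
  have main : ∀ b ∈ MulAction.orbit S (a i), ∃ x ∈ MulAction.orbit S b,
      ∀ j ∈ J, x ∈ MulAction.orbit S (a j) := by
    intro b hb
    -- choose witnesses of the intersections
    have hchoice : ∀ j : Fin k, ∃ x,
        (j ∈ J → x ∈ MulAction.orbit S (a j) ∩ MulAction.orbit S (a i)) ∧ (j ∉ J → x = b) := by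
      intro j
      by_cases hj : j ∈ J
      · exact ⟨hj.choose, fun _ => hj.choose_spec, fun h => absurd hj h⟩
      · exact ⟨b, fun h => absurd h hj, fun _ => rfl⟩
    choose c hc _ using hchoice
    -- the finite family of chosen elements, together with b
    set T : Finset A := insert b ((Finset.univ.filter (fun j => j ∈ J)).image c) with hT
    have hTsub : ∀ x ∈ T, x ∈ MulAction.orbit S (a i) := by
      intro x hx
      rcases Finset.mem_insert.1 hx with rfl | hx
      · exact hb
      · obtain ⟨j, hj, rfl⟩ := Finset.mem_image.1 hx
        exact (hc j (Finset.mem_filter.1 hj).2).2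
    have htot : ∀ x ∈ T, ∀ y ∈ T,
        MulAction.orbit S x ⊆ MulAction.orbit S y ∨
        MulAction.orbit S y ⊆ MulAction.orbit S x :=
      fun x hx y hy => orbit_lin hlin hA (a i) (hTsub x hx) (hTsub y hy)
    obtain ⟨m, hm, hmin⟩ := exists_min'
      (fun x y => MulAction.orbit S x ⊆ MulAction.orbit S y)
      (fun _ _ _ h1 h2 => h1.trans h2) T ⟨b, Finset.mem_insert_self b _⟩ htot
    refine ⟨m, ?_, ?_⟩
    · exact hmin b (Finset.mem_insert_self b _) (MulAction.mem_orbit_self m)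
    · intro j hj
      have hcj : c j ∈ T := Finset.mem_insert_of_mem
        (Finset.mem_image.2 ⟨j, Finset.mem_filter.2 ⟨Finset.mem_univ j, hj⟩, rfl⟩)
      have h1 : m ∈ MulAction.orbit S (c j) := hmin (c j) hcj (MulAction.mem_orbit_self m)
      exact orbit_subset_of_mem' (hc j hj).1 h1
  constructor
  · obtain ⟨x, _, hx2⟩ := main (a i) (MulAction.mem_orbit_self (a i))
    exact ⟨x, mem_iInter₂.2 hx2⟩
  · rintro ⟨b, hb1, hb2⟩
    obtain ⟨x, hx1, hx2⟩ := main b hb1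
    obtain ⟨s, rfl⟩ := hx1
    exact ⟨s • b, hB s b hb2, mem_iInter₂.2 hx2⟩
end

section
/- Let S be a monoid with regular core R such that the class ℜ of all regular left S-acts is axiomatizable, and suppose that for every a ∈ R and every idempotent e ∈ R with Sa ⊆ Se there exists an idempotent f ∈ R such that Sa = Sf and fS ⊆ eS. Then for every idempotent g ∈ R there exists an idempotent h ∈ R such that Sh ⊆ Sg, Sh is minimal by inclusion (there is no k ∈ R with Sk ⊊ Sh), and hS is minimal by inclusion among the principal right ideals of S generated by idempotents. -/
open Set FirstOrder FirstOrder.Language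

universe u

section Aux
variable {S : Type u} [Monoid S]

lemma orbit_mono' {a b : S} (h : b ∈ MulAction.orbit S a) :
    MulAction.orbit S b ⊆ MulAction.orbit S a := by
  rintro x ⟨s, rfl⟩
  obtain ⟨t, rfl⟩ := h
  exact ⟨s * t, by simp [mul_smul, mul_assoc]⟩

lemma regularCore_mem_of_orbit {a b : S} (hb : b ∈ MulAction.orbit S a)
    (ha : a ∈ regularCore S) : b ∈ regularCore S :=
  fun x hx => ha x (orbit_mono' hb hx)

instance orbitMulAction (g : S) : MulAction S (MulAction.orbit S g) where
  smul s x := ⟨s * x.1, by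
    obtain ⟨x, t, rfl⟩ := x
    exact ⟨s * t, by simp [smul_eq_mul, mul_assoc]⟩⟩
  one_smul x := Subtype.ext (one_mul x.1)
  mul_smul s t x := Subtype.ext (mul_assoc s t x.1)

lemma orbit_act_regular {g : S} (hg : g ∈ regularCore S) :
    IsRegularAct S (MulAction.orbit S g) := by
  intro a
  obtain ⟨F, hF1, hF2⟩ := hg a.1 a.2
  refine ⟨F ∘ Subtype.val, ?_, ?_⟩
  · rintro s x ⟨t, rfl⟩
    exact hF1 s (t • (a : S)) ⟨t, rfl⟩
  · exact Subtype.ext hF2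

end Aux
section Ultra
variable {S : Type u} [Monoid S]

noncomputable instance orbitStructure (g : S) :
    (actLanguage S).Structure (MulAction.orbit S g) :=
  actStructure S (MulAction.orbit S g)

instance orbitNonempty (g : S) : Nonempty (MulAction.orbit S g) :=
  ⟨⟨g, MulAction.mem_orbit_self g⟩⟩

/-- The symbol of `actLanguage S` corresponding to `s : S`. -/
def actSymb (s : S) : (actLanguage S).Functions 1 := s

lemma ultrapower_witness (hax : RegularClassAxiomatizable S)
    {g : S} (hg : g ∈ regularCore S) (f : ℕ → S)
    (hforb : ∀ n, f n ∈ MulAction.orbit S g)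
    (hchain : ∀ i k, i ≤ k → f i * f k = f k) :
    ∃ U : S, (∃ i, U * f i = f i) ∧ ∀ j, f j * U = U := by
  obtain ⟨Ax, hAx⟩ := hax
  have hAmodel : @FirstOrder.Language.Theory.Model _ _ (orbitStructure g) Ax :=
    (hAx _ (orbitStructure g)).mpr ⟨inferInstance, rfl, orbit_act_regular hg⟩
  have hQmodel : @FirstOrder.Language.Theory.Model _
      (((Filter.hyperfilter ℕ : Ultrafilter ℕ) : Filter ℕ).Product
        (fun _ : ℕ => (MulAction.orbit S g : Type u)))
      Ultraproduct.structure Ax := by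
    refine Theory.model_iff _ |>.mpr fun φ hφ => ?_
    exact (Ultraproduct.sentence_realize φ).mpr
      (Filter.Eventually.of_forall fun n => hAmodel.realize_of_mem φ hφ)
  obtain ⟨inst, hstr, hreg⟩ := (hAx _ Ultraproduct.structure).mp hQmodel
  letI := inst
  set mkQ : (∀ _ : ℕ, (MulAction.orbit S g : Type u)) →
      ((Filter.hyperfilter ℕ : Ultrafilter ℕ) : Filter ℕ).Product
        (fun _ : ℕ => (MulAction.orbit S g : Type u)) :=
    @Quotient.mk' _ (((Filter.hyperfilter ℕ : Ultrafilter ℕ) : Filter ℕ).productSetoid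
      (fun _ : ℕ => (MulAction.orbit S g : Type u))) with hmkQ
  have mkQ_eq : ∀ x y, mkQ x = mkQ y ↔
      ∀ᶠ n in ((Filter.hyperfilter ℕ : Ultrafilter ℕ) : Filter ℕ), x n = y n :=
    fun x y => Quotient.eq'
  have keysmul : ∀ (s : S) (x : ∀ _ : ℕ, (MulAction.orbit S g : Type u)),
      s • (mkQ x) = mkQ (fun n => s • x n) := by
    intro s x
    have h1 : s • (mkQ x) =
        @Structure.funMap _ _ (actStructure S _) 1 (actSymb s) (fun _ => mkQ x) := rfl
    rw [h1, ← hstr]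
    exact Ultraproduct.funMap_cast (L := actLanguage S) (actSymb s) (fun _ => x)
  set xv : ∀ _ : ℕ, (MulAction.orbit S g : Type u) := fun n => ⟨f n, hforb n⟩ with hxv
  obtain ⟨F, hF1, hF2⟩ := hreg (mkQ xv)
  refine ⟨F (mkQ xv), ?_, ?_⟩
  · have hev : ∀ᶠ n in ((Filter.hyperfilter ℕ : Ultrafilter ℕ) : Filter ℕ),
        F (mkQ xv) • xv n = xv n := by
      rw [← mkQ_eq, ← keysmul]
      exact hF2
    obtain ⟨i, hi⟩ := hev.exists
    exact ⟨i, congrArg Subtype.val hi⟩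
  · intro j
    have hjx : f j • mkQ xv = mkQ xv := by
      rw [keysmul, mkQ_eq]
      have hev : ∀ᶠ n in ((Filter.hyperfilter ℕ : Ultrafilter ℕ) : Filter ℕ), j ≤ n := by
        refine Filter.hyperfilter_le_cofinite ?_
        have hss : {n : ℕ | ¬ j ≤ n} ⊆ Set.Iio j := fun n hn => by
          simpa using Nat.lt_of_not_le hn
        exact Filter.eventually_cofinite.mpr ((Set.finite_Iio j).subset hss)
      exact hev.mono fun n hn => Subtype.ext (hchain j n hn)
    have := hF1 (f j) (mkQ xv) (MulAction.mem_orbit_self (mkQ xv))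
    rw [hjx] at this
    exact this.symm

end Ultra
lemma exists_min_orbit {S : Type u} [Monoid S]
    (hax : RegularClassAxiomatizable S)
    (hcond : ∀ a ∈ regularCore S, ∀ e ∈ regularCore S, IsIdempotentElem e →
      MulAction.orbit S a ⊆ MulAction.orbit S e →
      ∃ f ∈ regularCore S, IsIdempotentElem f ∧ MulAction.orbit S a = MulAction.orbit S f ∧
        Set.range (fun s : S => f * s) ⊆ Set.range (fun s : S => e * s))
    (g : S) (hg : g ∈ regularCore S) (hgi : IsIdempotentElem g) :
    ∃ h ∈ regularCore S, IsIdempotentElem h ∧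
      MulAction.orbit S h ⊆ MulAction.orbit S g ∧
      ∀ k ∈ regularCore S, ¬ MulAction.orbit S k ⊂ MulAction.orbit S h := by
  by_contra hno
  push_neg at hno
  have step : ∀ t : {f : S // f ∈ regularCore S ∧ IsIdempotentElem f ∧
        MulAction.orbit S f ⊆ MulAction.orbit S g},
      ∃ t' : {f : S // f ∈ regularCore S ∧ IsIdempotentElem f ∧
        MulAction.orbit S f ⊆ MulAction.orbit S g},
      MulAction.orbit S t'.1 ⊂ MulAction.orbit S t.1 ∧
      t.1 * t'.1 = t'.1 ∧ t'.1 * t.1 = t'.1 := by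
    rintro ⟨e, heR, hei, hesub⟩
    obtain ⟨k, hkR, hk⟩ := hno e heR hei hesub
    obtain ⟨f, hfR, hfi, hforb, hfid⟩ := hcond k hkR e heR hei hk.subset
    have horb : MulAction.orbit S f ⊂ MulAction.orbit S e := hforb ▸ hk
    have hef : e * f = f := by
      obtain ⟨t, ht⟩ := hfid ⟨1, mul_one f⟩
      simp only at ht
      rw [← ht, ← mul_assoc, hei]
    have hfe : f * e = f := by
      obtain ⟨s, hs⟩ := horb.subset (MulAction.mem_orbit_self f)
      simp only [smul_eq_mul] at hs
      rw [← hs, mul_assoc, hei]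
    exact ⟨⟨f, hfR, hfi, horb.subset.trans hesub⟩, horb, hef, hfe⟩
  choose st hst1 hst2 hst3 using step
  set t0 : {f : S // f ∈ regularCore S ∧ IsIdempotentElem f ∧
      MulAction.orbit S f ⊆ MulAction.orbit S g} := ⟨g, hg, hgi, subset_rfl⟩ with ht0
  set seq : ℕ → {f : S // f ∈ regularCore S ∧ IsIdempotentElem f ∧
      MulAction.orbit S f ⊆ MulAction.orbit S g} := fun n => st^[n] t0 with hseq
  have hsucc : ∀ n, seq (n + 1) = st (seq n) := fun n =>
    Function.iterate_succ_apply' st n t0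
  set f : ℕ → S := fun n => (seq n).1 with hf
  have hlt : ∀ n, MulAction.orbit S (f (n + 1)) ⊂ MulAction.orbit S (f n) := by
    intro n
    have := hst1 (seq n)
    rwa [← hsucc n] at this
  have h2 : ∀ n, f n * f (n + 1) = f (n + 1) := by
    intro n
    have := hst2 (seq n)
    rwa [← hsucc n] at this
  have h3 : ∀ n, f (n + 1) * f n = f (n + 1) := by
    intro n
    have := hst3 (seq n)
    rwa [← hsucc n] at this
  have hidem : ∀ n, f n * f n = f n := fun n => (seq n).2.2.1
  have hmono : ∀ i k, i ≤ k → f i * f k = f k ∧ f k * f i = f k := by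
    intro i k hik
    induction k, hik using Nat.le_induction with
    | base => exact ⟨hidem i, hidem i⟩
    | succ k hik ih =>
      constructor
      · calc f i * f (k + 1) = f i * (f k * f (k + 1)) := by rw [h2 k]
          _ = (f i * f k) * f (k + 1) := by rw [mul_assoc]
          _ = f k * f (k + 1) := by rw [ih.1]
          _ = f (k + 1) := h2 k
      · calc f (k + 1) * f i = (f (k + 1) * f k) * f i := by rw [h3 k]
          _ = f (k + 1) * (f k * f i) := by rw [mul_assoc]
          _ = f (k + 1) * f k := by rw [ih.2]
          _ = f (k + 1) := h3 k
  obtain ⟨U, ⟨i, hi⟩, hbU⟩ := ultrapower_witness hax hg f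
    (fun n => (seq n).2.2.2 (MulAction.mem_orbit_self _))
    (fun i k hik => (hmono i k hik).1)
  have heqf : f i = f (i + 1) := by
    calc f i = U * f i := hi.symm
      _ = (f (i + 1) * U) * f i := by rw [hbU (i + 1)]
      _ = f (i + 1) * (U * f i) := by rw [mul_assoc]
      _ = f (i + 1) * f i := by rw [hi]
      _ = f (i + 1) := (hmono i (i + 1) (Nat.le_succ i)).2
  have hcontra := hlt i
  rw [← heqf] at hcontra
  exact ssubset_irrefl _ hcontra
/-- Lemma 5.2: assume the class of regular `S`-acts is axiomatizable, and for every `a ∈ R`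
and idempotent `e ∈ R` with `Sa ⊆ Se` there is an idempotent `f ∈ R` with `Sa = Sf` and
`fS ⊆ eS`. Then for every idempotent `g ∈ R` there is an idempotent `h ∈ R` with `Sh ⊆ Sg`,
`Sh` minimal by inclusion, and `hS` minimal among principal right ideals of `S` generated by
idempotents. -/
theorem exists_minimal_idempotent (S : Type u) [Monoid S]
    (hR : (regularCore S).Nonempty) (hax : RegularClassAxiomatizable S)
    (hcond : ∀ a ∈ regularCore S, ∀ e ∈ regularCore S, IsIdempotentElem e →
      MulAction.orbit S a ⊆ MulAction.orbit S e →
      ∃ f ∈ regularCore S, IsIdempotentElem f ∧ MulAction.orbit S a = MulAction.orbit S f ∧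
        Set.range (fun s : S => f * s) ⊆ Set.range (fun s : S => e * s)) :
    ∀ g ∈ regularCore S, IsIdempotentElem g →
      ∃ h ∈ regularCore S, IsIdempotentElem h ∧
        MulAction.orbit S h ⊆ MulAction.orbit S g ∧
        (¬ ∃ k ∈ regularCore S, MulAction.orbit S k ⊂ MulAction.orbit S h) ∧
        (∀ f : S, IsIdempotentElem f →
          Set.range (fun s : S => f * s) ⊆ Set.range (fun s : S => h * s) →
          Set.range (fun s : S => f * s) = Set.range (fun s : S => h * s)) := by
  intro g hgR hgi
  obtain ⟨h, hhR, hhi, hhsub, hmin⟩ := exists_min_orbit hax hcond g hgR hgi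
  refine ⟨h, hhR, hhi, hhsub, ?_, ?_⟩
  · rintro ⟨k, hkR, hk⟩
    exact hmin k hkR hk
  · intro f hfi hsub
    -- h * f = f
    have hhf : h * f = f := by
      obtain ⟨t, ht⟩ := hsub ⟨1, mul_one f⟩
      simp only at ht
      rw [← ht, ← mul_assoc, hhi]
    -- a = f * h is an idempotent of the regular core with Sa = Sh
    have haorb : f * h ∈ MulAction.orbit S h := ⟨f, rfl⟩
    have haR : f * h ∈ regularCore S := regularCore_mem_of_orbit haorb hhR
    have hai : (f * h) * (f * h) = f * h := by
      calc (f * h) * (f * h) = f * ((h * f) * h) := by rw [mul_assoc, mul_assoc]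
        _ = f * (f * h) := by rw [hhf]
        _ = (f * f) * h := by rw [mul_assoc]
        _ = f * h := by rw [hfi]
    have horbeq : MulAction.orbit S (f * h) = MulAction.orbit S h := by
      by_contra hne
      exact hmin (f * h) haR (HasSubset.Subset.ssubset_of_ne (orbit_mono' haorb) hne)
    have hmem : h ∈ MulAction.orbit S (f * h) := horbeq ▸ MulAction.mem_orbit_self h
    obtain ⟨s, hs⟩ := hmem
    simp only [smul_eq_mul] at hs
    have hha : h * (f * h) = h := by
      calc h * (f * h) = (s * (f * h)) * (f * h) := by rw [hs]
        _ = s * ((f * h) * (f * h)) := by rw [mul_assoc]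
        _ = s * (f * h) := by rw [hai]
        _ = h := hs
    have hfh : f * h = h := by
      calc f * h = (h * f) * h := by rw [hhf]
        _ = h * (f * h) := by rw [mul_assoc]
        _ = h := hha
    refine Set.Subset.antisymm hsub ?_
    rintro x ⟨t, rfl⟩
    exact ⟨h * t, by simp only [← mul_assoc, hfh]⟩
end

section
/- If G is an infinite group, then the class ℜ of all regular left G-acts is axiomatizable and model complete. -/
open Set FirstOrder FirstOrder.Language

universe u

open scoped Pointwise

universe v w

section Aux

namespace RegActAux

/-! ### Terms and sentences of the act language -/

def smulTerm {S : Type u} {β : Type*} (g : S) (t : (actLanguage S).Term β) :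
    (actLanguage S).Term β :=
  Term.func (show (actLanguage S).Functions 1 from g) (fun _ => t)

def assocSentence {S : Type u} [Monoid S] (g h : S) : (actLanguage S).Sentence :=
  ((smulTerm g (smulTerm h (&0))).bdEqual (smulTerm (g*h) (&0))).all

def oneSentence (S : Type u) [Monoid S] : (actLanguage S).Sentence :=
  ((smulTerm (1 : S) (&0)).bdEqual (&0)).all

def freeSentence {S : Type u} (g : S) : (actLanguage S).Sentence :=
  (((smulTerm g (&0)).bdEqual (&0)).not).all

def exSentence (S : Type u) : (actLanguage S).Sentence :=
  (((&0 : (actLanguage S).Term (Empty ⊕ Fin 1))).bdEqual (&0)).ex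

section
variable {S : Type u} (A : Type u) (str : (actLanguage S).Structure A)

def sm (g : S) (x : A) : A :=
  str.funMap (show (actLanguage S).Functions 1 from g) (fun _ => x)

theorem realize_assoc [Monoid S] (g h : S) :
    (@Sentence.Realize _ A str (assocSentence g h)) ↔
      ∀ x : A, sm A str g (sm A str h x) = sm A str (g*h) x := by
  simp [assocSentence, Sentence.Realize, Formula.Realize, BoundedFormula.realize_all,
    BoundedFormula.realize_bdEqual, smulTerm, Term.realize, sm, Fin.snoc]

theorem realize_one [Monoid S] :
    (@Sentence.Realize _ A str (oneSentence S)) ↔ ∀ x : A, sm A str 1 x = x := by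
  simp [oneSentence, Sentence.Realize, Formula.Realize, BoundedFormula.realize_all,
    BoundedFormula.realize_bdEqual, smulTerm, Term.realize, sm, Fin.snoc]

theorem realize_free (g : S) :
    (@Sentence.Realize _ A str (freeSentence g)) ↔ ∀ x : A, ¬ (sm A str g x = x) := by
  simp [freeSentence, Sentence.Realize, Formula.Realize, BoundedFormula.realize_all,
    BoundedFormula.realize_not, BoundedFormula.realize_bdEqual, smulTerm, Term.realize, sm,
    Fin.snoc]

theorem realize_ex :
    (@Sentence.Realize _ A str (exSentence S)) ↔ Nonempty A := by
  simp [exSentence, Sentence.Realize, Formula.Realize, BoundedFormula.realize_ex,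
    BoundedFormula.realize_bdEqual]

end

/-! ### Free acts and regular acts over a group -/

theorem smul_cancel_of_free {S A : Type u} [Group S] [MulAction S A]
    (hf : ∀ (g : S) (x : A), g • x = x → g = 1) {g g' : S} {a : A}
    (h : g • a = g' • a) : g = g' := by
  have h1 : (g'⁻¹ * g) • a = a := by rw [mul_smul, h, inv_smul_smul]
  have h2 := hf _ _ h1
  rwa [inv_mul_eq_one, eq_comm] at h2

theorem eq_smul_self_iff {S A : Type u} [Group S] [MulAction S A]
    (hf : ∀ (g : S) (x : A), g • x = x → g = 1) (s : S) (x : A) :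
    (x = s • x) ↔ s = 1 := by
  constructor
  · intro h; exact hf s x h.symm
  · rintro rfl; rw [one_smul]

theorem isRegularAct_of_free {S A : Type u} [Group S] [MulAction S A]
    (hf : ∀ (g : S) (x : A), g • x = x → g = 1) : IsRegularAct S A := by
  classical
  intro a
  refine ⟨fun x => if h : ∃ g : S, x = g • a then h.choose else 1, ?_, ?_⟩
  · intro s x hx
    have hx' : ∃ g : S, x = g • a := by
      rcases hx with ⟨g, hg⟩; exact ⟨g, hg.symm⟩
    have hsx : ∃ g : S, s • x = g • a :=
      ⟨s * hx'.choose, by rw [mul_smul, ← hx'.choose_spec]⟩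
    simp only [dif_pos hx', dif_pos hsx]
    apply smul_cancel_of_free hf
    rw [← hsx.choose_spec, mul_smul, ← hx'.choose_spec]
  · have ha : ∃ g : S, a = g • a := ⟨1, (one_smul S a).symm⟩
    simp only [dif_pos ha]
    exact ha.choose_spec.symm

theorem free_of_regular {S A : Type u} [Group S] [MulAction S A]
    (hr : IsRegularAct S A) : ∀ (g : S) (x : A), g • x = x → g = 1 := by
  intro g x hgx
  obtain ⟨f, hf, _⟩ := hr x
  have h1 : f (g • x) = g * f x := hf g x (MulAction.mem_orbit_self x)
  rw [hgx] at h1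
  exact (mul_right_cancel (h1.symm.trans (one_mul (f x)).symm))

/-! ### The axioms for regular acts over a group -/

def actAxioms (G : Type u) [Group G] : (actLanguage G).Theory :=
  {σ | σ = oneSentence G ∨ (∃ g h : G, σ = assocSentence g h) ∨
      ∃ g : G, g ≠ 1 ∧ σ = freeSentence g}

theorem actAxioms_spec (G : Type u) [Group G] (A : Type u)
    (str : (actLanguage G).Structure A) :
    (@FirstOrder.Language.Theory.Model (actLanguage G) A str (actAxioms G)) ↔
      ∃ inst : MulAction G A, str = @actStructure G _ A inst ∧ @IsRegularAct G _ A inst := by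
  classical
  constructor
  · intro hA
    have h1 : ∀ x : A, sm A str 1 x = x :=
      (realize_one A str).mp (hA.realize_of_mem _ (Or.inl rfl))
    have h2 : ∀ g h : G, ∀ x : A, sm A str g (sm A str h x) = sm A str (g*h) x :=
      fun g h => (realize_assoc A str g h).mp
        (hA.realize_of_mem _ (Or.inr (Or.inl ⟨g, h, rfl⟩)))
    have h3 : ∀ g : G, g ≠ 1 → ∀ x : A, ¬ sm A str g x = x :=
      fun g hg => (realize_free A str g).mp
        (hA.realize_of_mem _ (Or.inr (Or.inr ⟨g, hg, rfl⟩)))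
    letI inst : MulAction G A :=
      { smul := sm A str
        one_smul := h1
        mul_smul := fun g h x => (h2 g h x).symm }
    have hfree : ∀ (g : G) (x : A), g • x = x → g = 1 := by
      intro g x hgx
      by_contra hg
      exact h3 g hg x hgx
    refine ⟨inst, ?_, isRegularAct_of_free hfree⟩
    refine Structure.ext ?_ ?_
    · funext n f x
      match n, f with
      | 0, f => exact PEmpty.elim f
      | 1, f =>
        show str.funMap f x = str.funMap f (fun _ => x 0)
        congr 1
        funext i
        fin_cases i
        rfl
      | n+2, f => exact PEmpty.elim f
    · funext n r x
      exact Empty.elim r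
  · rintro ⟨inst, rfl, hreg⟩
    letI := inst
    letI : (actLanguage G).Structure A := actStructure G A
    refine ⟨?_⟩
    rintro σ (rfl | ⟨g, h, rfl⟩ | ⟨g, hg, rfl⟩)
    · exact (realize_one A _).mpr (fun x => one_smul G x)
    · exact (realize_assoc A _ g h).mpr (fun x => (mul_smul g h x).symm)
    · exact (realize_free A _ g).mpr (fun x hx => hg (free_of_regular hreg g x hx))

theorem actAxioms_subset_regularTheory (G : Type u) [Group G] :
    actAxioms G ⊆ regularTheory G := by
  rintro σ (rfl | ⟨g, h, rfl⟩ | ⟨g, hg, rfl⟩) <;> intro A inst hreg _hinf <;> letI := inst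
  · exact (realize_one A _).mpr (fun x => one_smul G x)
  · exact (realize_assoc A _ g h).mpr (fun x => (mul_smul g h x).symm)
  · exact (realize_free A _ g).mpr (fun x hx => hg (free_of_regular hreg g x hx))

theorem exSentence_mem_regularTheory (G : Type u) [Group G] :
    exSentence G ∈ regularTheory G := by
  intro A inst hreg hinf
  letI := inst
  exact (realize_ex A _).mpr ⟨Classical.arbitrary A⟩

def termData {S : Type u} [Monoid S] {β : Type*} : (actLanguage S).Term β → S × β
  | .var v => (1, v)
  | @Term.func _ _ 0 f _ => PEmpty.elim f
  | @Term.func _ _ 1 f ts =>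
      let d := termData (ts 0)
      ((show S from f) * d.1, d.2)
  | @Term.func _ _ (_+2) f _ => PEmpty.elim f

theorem termData_realize {S : Type u} [Monoid S] {A : Type u} [MulAction S A] {β : Type*}
    (t : (actLanguage S).Term β) (env : β → A) :
    @Term.realize (actLanguage S) A (actStructure S A) β env t
      = (termData t).1 • env (termData t).2 := by
  induction t with
  | var v => simp [termData, Term.realize]
  | @func n f ts ih =>
      match n, f, ts with
      | 0, f, _ => exact PEmpty.elim f
      | 1, f, ts =>
          simp only [termData, Term.realize, actStructure]
          change (show S from f) • @Term.realize (actLanguage S) A (actStructure S A) β env (ts 0) =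
            ((show S from f) * (termData (ts 0)).1) • env (termData (ts 0)).2
          rw [ih 0]
          rw [mul_smul]
      | n+2, f, _ => exact PEmpty.elim f

/-- The finite set of group elements relevant to a formula. -/
def fs {G : Type u} [Group G] : ∀ {α : Type v} {n : ℕ},
    (actLanguage G).BoundedFormula α n → Set G
  | _, _, .falsum => {1}
  | _, _, .equal t₁ t₂ =>
      {1, (termData t₁).1⁻¹ * (termData t₂).1, (termData t₂).1⁻¹ * (termData t₁).1}
  | _, _, .rel R _ => Empty.elim R
  | _, _, .imp φ ψ => fs φ ∪ fs ψ
  | _, _, .all φ => fs φ * fs φ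

theorem one_mem_fs {G : Type u} [Group G] {α : Type v} {n : ℕ}
    (φ : (actLanguage G).BoundedFormula α n) : (1 : G) ∈ fs φ := by
  induction φ with
  | falsum => simp [fs]
  | equal t₁ t₂ => simp [fs]
  | rel R ts => exact Empty.elim R
  | imp φ ψ ih₁ ih₂ => simp only [fs]; exact Set.mem_union_left _ ih₁
  | all φ ih => simp only [fs]; exact ⟨1, ih, 1, ih, mul_one 1⟩

theorem inv_mem_fs {G : Type u} [Group G] {α : Type v} {n : ℕ}
    (φ : (actLanguage G).BoundedFormula α n) : ∀ s ∈ fs φ, s⁻¹ ∈ fs φ := by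
  induction φ with
  | falsum => intro s hs; simp only [fs, Set.mem_singleton_iff] at hs ⊢; rw [hs, inv_one]
  | equal t₁ t₂ =>
      intro s hs
      simp only [fs, Set.mem_insert_iff, Set.mem_singleton_iff] at hs ⊢
      rcases hs with rfl | rfl | rfl
      · left; exact inv_one
      · right; right; rw [mul_inv_rev, inv_inv]
      · right; left; rw [mul_inv_rev, inv_inv]
  | rel R ts => exact Empty.elim R
  | imp φ ψ ih₁ ih₂ =>
      intro s hs
      simp only [fs] at hs ⊢
      rcases hs with h | h
      · exact Set.mem_union_left _ (ih₁ s h)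
      · exact Set.mem_union_right _ (ih₂ s h)
  | all φ ih =>
      intro s hs
      simp only [fs] at hs ⊢
      rw [Set.mem_mul] at hs ⊢
      obtain ⟨x, hx, y, hy, rfl⟩ := hs
      exact ⟨y⁻¹, ih y hy, x⁻¹, ih x hx, (mul_inv_rev x y).symm⟩

theorem finite_fs {G : Type u} [Group G] {α : Type v} {n : ℕ}
    (φ : (actLanguage G).BoundedFormula α n) : (fs φ).Finite := by
  induction φ with
  | falsum => simp only [fs]; exact Set.finite_singleton _
  | equal t₁ t₂ => simp only [fs]; exact (Set.finite_singleton _).insert _ |>.insert _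
  | rel R ts => exact Empty.elim R
  | imp φ ψ ih₁ ih₂ => simp only [fs]; exact ih₁.union ih₂
  | all φ ih => simp only [fs]; exact ih.mul ih

theorem witness {G M N : Type u} [Group G] [Infinite G] [MulAction G M] [MulAction G N]
    (freeM : ∀ (g : G) (x : M), g • x = x → g = 1)
    (freeN : ∀ (g : G) (y : N), g • y = y → g = 1)
    (hM : Nonempty M) {ι : Type w} [Finite ι]
    (S : Set G) (hfin : S.Finite) (hsym : ∀ s ∈ S, s⁻¹ ∈ S)
    (p : ι → M) (q : ι → N)
    (hA : ∀ (i j : ι) (s : G), s ∈ S * S →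
      (p i = s • p j ↔ q i = s • q j))
    (b' : N) :
    ∃ b : M,
      (∀ (i : ι) (s : G), s ∈ S →
        ((b = s • p i ↔ b' = s • q i) ∧ (p i = s • b ↔ q i = s • b'))) ∧
      (∀ s : G, s ∈ S → (b = s • b ↔ b' = s • b')) := by
  classical
  by_cases hcase : ∃ i : ι, ∃ s ∈ S, b' = s • q i
  · obtain ⟨i₀, s₀, hs₀, hb'⟩ := hcase
    refine ⟨s₀ • p i₀, fun i s hs => ⟨?_, ?_⟩, fun s hs => ?_⟩
    · have e1 : (s₀ • p i₀ = s • p i) ↔ (p i₀ = (s₀⁻¹ * s) • p i) := by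
        rw [mul_smul]
        exact ⟨fun h => by rw [← h, inv_smul_smul], fun h => by rw [h, smul_inv_smul]⟩
      have e2 : (b' = s • q i) ↔ (q i₀ = (s₀⁻¹ * s) • q i) := by
        rw [hb', mul_smul]
        exact ⟨fun h => by rw [← h, inv_smul_smul], fun h => by rw [h, smul_inv_smul]⟩
      rw [e1, e2]
      exact hA i₀ i _ (Set.mul_mem_mul (hsym s₀ hs₀) hs)
    · rw [hb', ← mul_smul, ← mul_smul]
      exact hA i i₀ _ (Set.mul_mem_mul hs hs₀)
    · rw [eq_smul_self_iff freeM, eq_smul_self_iff freeN]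
  · push_neg at hcase
    have hInf : Infinite M := by
      obtain ⟨m₀⟩ := hM
      exact Infinite.of_injective (fun g : G => g • m₀)
        (fun g h hg => smul_cancel_of_free freeM hg)
    have hBfin : {m : M | ∃ i : ι, ∃ s ∈ S, m = s • p i}.Finite := by
      have hsub : {m : M | ∃ i : ι, ∃ s ∈ S, m = s • p i} ⊆
          (fun x : G × ι => x.1 • p x.2) '' (S ×ˢ (Set.univ : Set ι)) := by
        rintro m ⟨i, s, hs, rfl⟩
        exact ⟨(s, i), ⟨hs, trivial⟩, rfl⟩
      exact ((hfin.prod Set.finite_univ).image _).subset hsub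
    obtain ⟨b, hb⟩ := hBfin.infinite_compl.nonempty
    simp only [Set.mem_compl_iff, Set.mem_setOf_eq] at hb
    push_neg at hb
    refine ⟨b, fun i s hs => ⟨?_, ?_⟩, fun s hs => ?_⟩
    · exact iff_of_false (fun h => hb i s hs h) (fun h => hcase i s hs h)
    · refine iff_of_false ?_ ?_
      · intro h; exact hb i s⁻¹ (hsym s hs) (by rw [h, inv_smul_smul])
      · intro h; exact hcase i s⁻¹ (hsym s hs) (by rw [h, inv_smul_smul])
    · rw [eq_smul_self_iff freeM, eq_smul_self_iff freeN]

theorem mainLemma {G : Type u} [Group G] [Infinite G] {α : Type v} [Finite α] :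
    ∀ {n : ℕ} (φ : (actLanguage G).BoundedFormula α n)
      (M N : Type u) (iM : MulAction G M) (iN : MulAction G N),
      (∀ (g : G) (x : M), g • x = x → g = 1) →
      (∀ (g : G) (y : N), g • y = y → g = 1) →
      Nonempty M → Nonempty N →
      ∀ (v : α → M) (xs : Fin n → M) (w : α → N) (ys : Fin n → N),
      (∀ (i j : α ⊕ Fin n) (s : G), s ∈ fs φ →
        (Sum.elim v xs i = s • Sum.elim v xs j ↔ Sum.elim w ys i = s • Sum.elim w ys j)) →
      ((@BoundedFormula.Realize _ M (@actStructure G _ M iM) _ _ φ v xs) ↔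
        (@BoundedFormula.Realize _ N (@actStructure G _ N iN) _ _ φ w ys)) := by
  intro n φ
  induction φ with
  | falsum =>
      intro M N iM iN fM fN hM hN v xs w ys hA
      simp [BoundedFormula.Realize]
  | @equal m t₁ t₂ =>
      intro M N iM iN fM fN hM hN v xs w ys hA
      letI := iM; letI := iN
      simp only [BoundedFormula.Realize]
      rw [termData_realize, termData_realize, termData_realize, termData_realize]
      set g₁ := (termData t₁).1
      set g₂ := (termData t₂).1
      set i₁ := (termData t₁).2
      set i₂ := (termData t₂).2
      have e1 : ∀ (A : Type u) (iA : MulAction G A) (E : α ⊕ Fin m → A),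
          (g₁ • E i₁ = g₂ • E i₂) ↔ (E i₁ = (g₁⁻¹ * g₂) • E i₂) := by
        intro A iA E
        rw [mul_smul]
        exact ⟨fun h => by rw [← h, inv_smul_smul], fun h => by rw [h, smul_inv_smul]⟩
      rw [e1 M iM, e1 N iN]
      exact hA i₁ i₂ (g₁⁻¹ * g₂) (by simp only [fs]; exact Set.mem_insert_of_mem _ (Set.mem_insert _ _))
  | rel R ts =>
      exact Empty.elim R
  | imp φ ψ ih₁ ih₂ =>
      intro M N iM iN fM fN hM hN v xs w ys hA
      simp only [BoundedFormula.Realize]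
      exact imp_congr
        (ih₁ M N iM iN fM fN hM hN v xs w ys
          (fun i j s hs => hA i j s (by simp only [fs]; exact Set.mem_union_left _ hs)))
        (ih₂ M N iM iN fM fN hM hN v xs w ys
          (fun i j s hs => hA i j s (by simp only [fs]; exact Set.mem_union_right _ hs)))
  | @all m ψ ih =>
      intro M N iM iN fM fN hM hN v xs w ys hA
      letI := iM; letI := iN
      letI : (actLanguage G).Structure M := actStructure G M
      letI : (actLanguage G).Structure N := actStructure G N
      have key : ∀ (M N : Type u) (iM : MulAction G M) (iN : MulAction G N),
          (∀ (g : G) (x : M), g • x = x → g = 1) →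
          (∀ (g : G) (y : N), g • y = y → g = 1) →
          Nonempty M → Nonempty N →
          ∀ (v : α → M) (xs : Fin m → M) (w : α → N) (ys : Fin m → N),
          (∀ (i j : α ⊕ Fin m) (s : G), s ∈ fs (ψ.all) →
            (Sum.elim v xs i = s • Sum.elim v xs j ↔ Sum.elim w ys i = s • Sum.elim w ys j)) →
          (∀ b' : N, ∃ b : M,
            ∀ (k l : α ⊕ Fin (m+1)) (s : G), s ∈ fs ψ →
              (Sum.elim v (Fin.snoc xs b) k = s • Sum.elim v (Fin.snoc xs b) l ↔
                Sum.elim w (Fin.snoc ys b') k = s • Sum.elim w (Fin.snoc ys b') l)) := by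
        intro M N iM iN fM fN hM hN v xs w ys hA b'
        letI := iM; letI := iN
        obtain ⟨b, hb1, hb2⟩ := witness fM fN hM (fs ψ) (finite_fs ψ) (inv_mem_fs ψ)
          (Sum.elim v xs) (Sum.elim w ys) (fun i j s hs => hA i j s (by simpa [fs] using hs)) b'
        refine ⟨b, ?_⟩
        have cls : ∀ k : α ⊕ Fin (m+1),
            (∃ k₀ : α ⊕ Fin m, Sum.elim v (Fin.snoc xs b) k = Sum.elim v xs k₀ ∧
              Sum.elim w (Fin.snoc ys b') k = Sum.elim w ys k₀) ∨
            (Sum.elim v (Fin.snoc xs b) k = b ∧ Sum.elim w (Fin.snoc ys b') k = b') := by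
          rintro (a | i)
          · exact Or.inl ⟨Sum.inl a, rfl, rfl⟩
          · refine Fin.lastCases ?_ ?_ i
            · exact Or.inr ⟨by simp, by simp⟩
            · intro i'
              exact Or.inl ⟨Sum.inr i', by simp, by simp⟩
        intro k l s hs
        rcases cls k with ⟨k₀, ek, ek'⟩ | ⟨ek, ek'⟩ <;>
          rcases cls l with ⟨l₀, el, el'⟩ | ⟨el, el'⟩ <;> rw [ek, ek', el, el']
        · exact hA k₀ l₀ s (by simp only [fs]; exact ⟨s, hs, 1, one_mem_fs ψ, mul_one s⟩)
        · exact (hb1 k₀ s hs).2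
        · exact (hb1 l₀ s hs).1
        · exact hb2 s hs
      simp only [BoundedFormula.realize_all]
      constructor
      · intro h b'
        obtain ⟨b, hb⟩ := key M N iM iN fM fN hM hN v xs w ys hA b'
        exact (ih M N iM iN fM fN hM hN v (Fin.snoc xs b) w (Fin.snoc ys b') hb).mp (h b)
      · intro h b
        obtain ⟨b', hb⟩ := key N M iN iM fN fM hN hM w ys v xs
          (fun i j s hs => (hA i j s hs).symm) b
        exact (ih M N iM iN fM fN hM hN v (Fin.snoc xs b) w (Fin.snoc ys b')
          (fun k l s hs => (hb k l s hs).symm)).mpr (h b')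


theorem regularTheory_modelComplete (G : Type u) [Group G] [Infinite G] :
    RegularClassModelComplete G := by
  intro M N sM sN hM hN f n φ x
  obtain ⟨instM, rfl, hregM⟩ := (actAxioms_spec G M sM).mp
    (hM.mono (actAxioms_subset_regularTheory G))
  obtain ⟨instN, rfl, hregN⟩ := (actAxioms_spec G N sN).mp
    (hN.mono (actAxioms_subset_regularTheory G))
  letI := instM; letI := instN
  letI : (actLanguage G).Structure M := actStructure G M
  letI : (actLanguage G).Structure N := actStructure G N
  have freeM := free_of_regular hregM
  have freeN := free_of_regular hregN
  have hNonM : Nonempty M :=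
    (realize_ex M _).mp (hM.realize_of_mem _ (exSentence_mem_regularTheory G))
  have hNonN : Nonempty N :=
    (realize_ex N _).mp (hN.realize_of_mem _ (exSentence_mem_regularTheory G))
  have hfeq : ∀ (g : G) (m : M), f (g • m) = g • f m := by
    intro g m
    exact f.map_fun (show (actLanguage G).Functions 1 from g) (fun _ => m)
  have agree : ∀ (i j : Fin n ⊕ Fin 0) (s : G), s ∈ fs φ →
      (Sum.elim x (default : Fin 0 → M) i = s • Sum.elim x default j ↔
        Sum.elim (fun i => f (x i)) (default : Fin 0 → N) i =
          s • Sum.elim (fun i => f (x i)) default j) := by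
    rintro (i | i) (j | j) s _hs
    · constructor
      · intro h
        show f (x i) = s • f (x j)
        rw [show x i = s • x j from h, hfeq]
      · intro h
        have : f (x i) = f (s • x j) := by rw [hfeq]; exact h
        exact f.injective this
    · exact j.elim0
    · exact i.elim0
    · exact i.elim0
  exact (mainLemma φ M N instM instN freeM freeN hNonM hNonN x default
    (fun i => f (x i)) default agree).symm

end RegActAux

end Aux

/-- Corollary 5.1: the class of all regular left `G`-acts over an infinite group `G` is
axiomatizable and model complete. -/
theorem regularClass_axiomatizable_and_modelComplete_of_infinite_group
    (G : Type u) [Group G] [Infinite G] :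
    RegularClassAxiomatizable G ∧ RegularClassModelComplete G :=
  ⟨⟨RegActAux.actAxioms G, RegActAux.actAxioms_spec G⟩, RegActAux.regularTheory_modelComplete G⟩
end

section
/- Let S be a monoid with nonempty regular core. If the class ℜ of all regular left S-acts is model complete, then ℜ is complete; in particular, any two regular left S-acts satisfying the theory of the class of infinite regular S-acts are elementarily equivalent (the proof shows A and B are elementary substructures of their coproduct A ⊔ B, hence Th(A) = Th(B)). -/
open Set FirstOrder FirstOrder.Language

universe u

section AuxRegular

variable {S : Type u} [Monoid S]

/-- Componentwise action on a coproduct (disjoint union) of two acts. -/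
def sumMulAction (A B : Type u) [MulAction S A] [MulAction S B] :
    MulAction S (A ⊕ B) where
  smul s x := Sum.map (fun a => s • a) (fun b => s • b) x
  one_smul x := by
    cases x with
    | inl a => exact congrArg Sum.inl (one_smul S a)
    | inr b => exact congrArg Sum.inr (one_smul S b)
  mul_smul s t x := by
    cases x with
    | inl a => exact congrArg Sum.inl (mul_smul s t a)
    | inr b => exact congrArg Sum.inr (mul_smul s t b)

/-- The coproduct of regular acts is regular. -/
theorem sumRegular (A B : Type u) [MulAction S A] [MulAction S B]
    (hA : IsRegularAct S A) (hB : IsRegularAct S B) :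
    @IsRegularAct S _ (A ⊕ B) (sumMulAction A B) := by
  letI := sumMulAction (S := S) A B
  intro z
  cases z with
  | inl a =>
    obtain ⟨f, hf1, hf2⟩ := hA a
    refine ⟨Sum.elim f fun _ => 1, ?_, ?_⟩
    · intro s w hw
      obtain ⟨t, rfl⟩ := hw
      show f (s • t • a) = s * f (t • a)
      exact hf1 s (t • a) (MulAction.mem_orbit a t)
    · exact congrArg Sum.inl hf2
  | inr b =>
    obtain ⟨f, hf1, hf2⟩ := hB b
    refine ⟨Sum.elim (fun _ => 1) f, ?_, ?_⟩
    · intro s w hw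
      obtain ⟨t, rfl⟩ := hw
      show f (s • t • b) = s * f (t • b)
      exact hf1 s (t • b) (MulAction.mem_orbit b t)
    · exact congrArg Sum.inr hf2

/-- The left inclusion into a coproduct is an `L_S`-embedding. -/
def inlEmbedding (A B : Type u) [MulAction S A] [MulAction S B] :
    @FirstOrder.Language.Embedding (actLanguage S) A (A ⊕ B) (actStructure S A)
      (@actStructure S _ (A ⊕ B) (sumMulAction A B)) :=
  letI : (actLanguage S).Structure A := actStructure S A
  letI : MulAction S (A ⊕ B) := sumMulAction A B
  letI : (actLanguage S).Structure (A ⊕ B) := actStructure S (A ⊕ B)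
  { toFun := Sum.inl
    inj' := Sum.inl_injective
    map_fun' := by
      intro n f x
      match n, f with
      | 0, f => exact f.elim
      | 1, s => rfl
      | n + 2, f => exact f.elim
    map_rel' := by
      intro n r x
      exact r.elim }

/-- The right inclusion into a coproduct is an `L_S`-embedding. -/
def inrEmbedding (A B : Type u) [MulAction S A] [MulAction S B] :
    @FirstOrder.Language.Embedding (actLanguage S) B (A ⊕ B) (actStructure S B)
      (@actStructure S _ (A ⊕ B) (sumMulAction A B)) :=
  letI : (actLanguage S).Structure B := actStructure S B
  letI : MulAction S (A ⊕ B) := sumMulAction A B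
  letI : (actLanguage S).Structure (A ⊕ B) := actStructure S (A ⊕ B)
  { toFun := Sum.inr
    inj' := Sum.inr_injective
    map_fun' := by
      intro n f x
      match n, f with
      | 0, f => exact f.elim
      | 1, s => rfl
      | n + 2, f => exact f.elim
    map_rel' := by
      intro n r x
      exact r.elim }

/-- Any infinite regular act is a model of the theory of infinite regular acts. -/
theorem modelRegular_of_infinite (A : Type u) (iA : MulAction S A)
    (rA : @IsRegularAct S _ A iA) (h : Infinite A) :
    @FirstOrder.Language.Theory.Model (actLanguage S) A (@actStructure S _ A iA)
      (regularTheory S) := by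
  letI := iA
  letI := actStructure S A
  rw [Theory.model_iff]
  intro φ hφ
  exact hφ A iA rA h

/-- Any model of the theory of infinite regular acts is infinite. -/
theorem infinite_of_modelRegular (A : Type u) (iA : MulAction S A)
    (mA : @FirstOrder.Language.Theory.Model (actLanguage S) A (@actStructure S _ A iA)
      (regularTheory S)) : Infinite A := by
  letI := iA
  letI := actStructure S A
  rw [Cardinal.infinite_iff, Cardinal.aleph0_le]
  intro n
  have hmem : Sentence.cardGe (actLanguage S) n ∈ regularTheory S := by
    simp only [regularTheory, Set.mem_setOf_eq]
    intro B iB rB hB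
    letI := iB
    letI := actStructure S B
    exact (Sentence.realize_cardGe (actLanguage S) n).2
      ((Cardinal.nat_lt_aleph0 n).le.trans (Cardinal.aleph0_le_mk B))
  exact (Sentence.realize_cardGe (actLanguage S) n).1 (Theory.realize_sentence_of_mem (regularTheory S) hmem)

/-- The action on `(Sa) × ℕ`. -/
def coreAction (a : S) : MulAction S (↥(MulAction.orbit S a) × ULift.{u} ℕ) where
  smul s x := (⟨s • (x.1 : S), by
      obtain ⟨t, ht⟩ := x.1.2
      exact ⟨s * t, by rw [← ht, smul_smul]⟩⟩, x.2)
  one_smul x := Prod.ext (Subtype.ext (one_smul S (x.1 : S))) rfl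
  mul_smul s t x := Prod.ext (Subtype.ext (mul_smul s t (x.1 : S))) rfl

/-- `(Sa) × ℕ` is a regular act when `a` is in the regular core. -/
theorem coreRegular (a : S) (ha : a ∈ regularCore S) :
    @IsRegularAct S _ (↥(MulAction.orbit S a) × ULift.{u} ℕ) (coreAction a) := by
  letI := coreAction (S := S) a
  intro z
  obtain ⟨f, hf1, hf2⟩ := ha (z.1 : S) z.1.2
  refine ⟨fun w => f (w.1 : S), ?_, ?_⟩
  · intro s w hw
    obtain ⟨t, rfl⟩ := hw
    show f (s • t • (z.1 : S)) = s * f (t • (z.1 : S))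
    exact hf1 s (t • (z.1 : S)) (MulAction.mem_orbit _ t)
  · exact Prod.ext (Subtype.ext hf2) rfl

end AuxRegular

/-- Lemma 6.1: if the class of regular left `S`-acts is model complete, then it is complete;
in particular, any two regular left `S`-acts that are models of the theory of the class of
infinite regular `S`-acts are elementarily equivalent. -/
theorem regularClassComplete_of_modelComplete (S : Type u) [Monoid S]
    (hR : (regularCore S).Nonempty) (hmc : RegularClassModelComplete S) :
    RegularClassComplete S ∧
      ∀ (A B : Type u) (iA : MulAction S A) (iB : MulAction S B),
        @IsRegularAct S _ A iA → @IsRegularAct S _ B iB →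
        @FirstOrder.Language.Theory.Model (actLanguage S) A (@actStructure S _ A iA)
          (regularTheory S) →
        @FirstOrder.Language.Theory.Model (actLanguage S) B (@actStructure S _ B iB)
          (regularTheory S) →
        ∀ φ : (actLanguage S).Sentence,
          @FirstOrder.Language.Sentence.Realize (actLanguage S) A (@actStructure S _ A iA) φ ↔
          @FirstOrder.Language.Sentence.Realize (actLanguage S) B (@actStructure S _ B iB) φ := by
  have key : ∀ (A B : Type u) (iA : MulAction S A) (iB : MulAction S B),
      @IsRegularAct S _ A iA → @IsRegularAct S _ B iB →
      @FirstOrder.Language.Theory.Model (actLanguage S) A (@actStructure S _ A iA)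
        (regularTheory S) →
      @FirstOrder.Language.Theory.Model (actLanguage S) B (@actStructure S _ B iB)
        (regularTheory S) →
      ∀ φ : (actLanguage S).Sentence,
        @FirstOrder.Language.Sentence.Realize (actLanguage S) A (@actStructure S _ A iA) φ ↔
        @FirstOrder.Language.Sentence.Realize (actLanguage S) B (@actStructure S _ B iB) φ := by
    intro A B iA iB rA rB mA mB φ
    letI := iA
    letI := iB
    letI sA : (actLanguage S).Structure A := actStructure S A
    letI sB : (actLanguage S).Structure B := actStructure S B
    haveI hiA : Infinite A := infinite_of_modelRegular A iA mA
    letI iC := sumMulAction (S := S) A B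
    have rC := sumRegular A B rA rB
    haveI hiC : Infinite (A ⊕ B) := inferInstance
    have mC := modelRegular_of_infinite (A ⊕ B) iC rC hiC
    letI sC : (actLanguage S).Structure (A ⊕ B) := actStructure S (A ⊕ B)
    set ψ : (actLanguage S).Formula (Fin 0) := φ.relabel (fun e => e.elim) with hψ
    have hA := hmc A (A ⊕ B) (actStructure S A) (@actStructure S _ (A ⊕ B) iC) mA mC
      (inlEmbedding A B) 0 ψ Fin.elim0
    have hB := hmc B (A ⊕ B) (actStructure S B) (@actStructure S _ (A ⊕ B) iC) mB mC
      (inrEmbedding A B) 0 ψ Fin.elim0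
    rw [hψ, Formula.realize_relabel, Formula.realize_relabel] at hA hB
    have hA' : @FirstOrder.Language.Sentence.Realize (actLanguage S) (A ⊕ B)
        (@actStructure S _ (A ⊕ B) iC) φ ↔
        @FirstOrder.Language.Sentence.Realize (actLanguage S) A (@actStructure S _ A iA) φ := by
      show Formula.Realize (M := A ⊕ B) φ default ↔ Formula.Realize (M := A) φ default
      rw [show (default : Empty → A ⊕ B) =
            ((fun i => (inlEmbedding (S := S) A B) (Fin.elim0 i)) ∘ fun e : Empty => e.elim) from
          funext fun e => e.elim,
        show (default : Empty → A) = (Fin.elim0 ∘ fun e : Empty => e.elim) from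
          funext fun e => e.elim]
      exact hA
    have hB' : @FirstOrder.Language.Sentence.Realize (actLanguage S) (A ⊕ B)
        (@actStructure S _ (A ⊕ B) iC) φ ↔
        @FirstOrder.Language.Sentence.Realize (actLanguage S) B (@actStructure S _ B iB) φ := by
      show Formula.Realize (M := A ⊕ B) φ default ↔ Formula.Realize (M := B) φ default
      rw [show (default : Empty → A ⊕ B) =
            ((fun i => (inrEmbedding (S := S) A B) (Fin.elim0 i)) ∘ fun e : Empty => e.elim) from
          funext fun e => e.elim,
        show (default : Empty → B) = (Fin.elim0 ∘ fun e : Empty => e.elim) from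
          funext fun e => e.elim]
      exact hB
    exact hA'.symm.trans hB'
  refine ⟨⟨?_, ?_⟩, key⟩
  · -- satisfiability
    obtain ⟨a, ha⟩ := hR
    letI iM := coreAction (S := S) a
    letI := actStructure S (↥(MulAction.orbit S a) × ULift.{u} ℕ)
    haveI : Infinite (↥(MulAction.orbit S a) × ULift.{u} ℕ) :=
      Infinite.of_injective
        (fun n : ℕ => (⟨a, MulAction.mem_orbit_self a⟩, ULift.up n))
        (by intro m n h; simpa using congrArg (fun p => p.2.down) h)
    haveI := modelRegular_of_infinite _ iM (coreRegular a ha) this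
    exact ⟨⟨↥(MulAction.orbit S a) × ULift.{u} ℕ⟩⟩
  · -- completeness
    intro φ
    by_cases h : φ ∈ regularTheory S
    · exact Or.inl h
    · right
      simp only [regularTheory, Set.mem_setOf_eq] at h
      push_neg at h
      obtain ⟨A, iA, rA, hiA, hAφ⟩ := h
      simp only [regularTheory, Set.mem_setOf_eq]
      intro B iB rB hiB
      letI := iB
      letI := actStructure S B
      rw [Sentence.realize_not]
      intro hBφ
      exact hAφ ((key A B iA iB rA rB (modelRegular_of_infinite A iA rA hiA)
        (modelRegular_of_infinite B iB rB hiB) φ).2 hBφ)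
end

section
/- Let S be a monoid of finite left depth, i.e., there is a finite upper bound on the lengths of strictly increasing chains of principal left ideals of S, and suppose the regular core of S equals S. Then for every a ∈ S with Sa = S, one has 1 ∈ aS; that is, a has a right inverse in S. -/
open Set

universe u

/-- Lemma 6.12: if `S` has finite left depth (a finite bound on lengths of strictly increasing
chains of principal left ideals) and the regular core of `S` is all of `S`, then every `a ∈ S`
with `Sa = S` has a right inverse, i.e. `1 ∈ aS`. -/
theorem right_invertible_of_finite_depth (S : Type u) [Monoid S]
    (hdepth : ∃ N : ℕ, ∀ (n : ℕ) (c : Fin (n + 1) → S),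
      (∀ i j : Fin (n + 1), i < j → MulAction.orbit S (c i) ⊂ MulAction.orbit S (c j)) →
      n ≤ N)
    (hcore : regularCore S = Set.univ) :
    ∀ a : S, MulAction.orbit S a = Set.univ → ∃ s : S, a * s = 1 := by
  intro a ha
  by_contra h
  push_neg at h
  obtain ⟨N, hN⟩ := hdepth
  have h1 : (1 : S) ∈ MulAction.orbit S a := ha ▸ Set.mem_univ 1
  obtain ⟨t, ht⟩ := h1
  simp only [smul_eq_mul] at ht
  have hpow : ∀ n : ℕ, t ^ n * a ^ n = 1 := by
    intro n
    induction n with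
    | zero => simp
    | succ n ih =>
      rw [pow_succ t, pow_succ' a, mul_assoc, ← mul_assoc t, ht, one_mul, ih]
  -- t^n is not in the orbit of t^(n+1)
  have hkey : ∀ n : ℕ, t ^ n ∉ MulAction.orbit S (t ^ (n + 1)) := by
    intro n ⟨s, hs⟩
    simp only [smul_eq_mul] at hs
    have h2 : s * t = 1 := by
      have := hpow n
      rw [← hs, pow_succ', mul_assoc, mul_assoc, hpow n, mul_one] at this
      exact this
    have : a = s := by
      calc a = (s * t) * a := by rw [h2, one_mul]
        _ = s * (t * a) := by rw [mul_assoc]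
        _ = s := by rw [ht, mul_one]
    exact h t (by rw [this, h2])
  have hsub : ∀ k l : ℕ, l ≤ k →
      MulAction.orbit S (t ^ k) ⊆ MulAction.orbit S (t ^ l) := by
    intro k l hlk x ⟨s, hs⟩
    refine ⟨s * t ^ (k - l), ?_⟩
    simp only [smul_eq_mul] at hs ⊢
    rw [← hs, mul_assoc, ← pow_add]
    congr 2
    omega
  have hssub : ∀ k l : ℕ, l < k →
      MulAction.orbit S (t ^ k) ⊂ MulAction.orbit S (t ^ l) := by
    intro k l hlk
    refine ⟨hsub k l hlk.le, fun hcon => ?_⟩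
    have : t ^ l ∈ MulAction.orbit S (t ^ (l + 1)) :=
      hsub k (l + 1) hlk (hcon (MulAction.mem_orbit_self _))
    exact hkey l this
  have := hN (N + 1) (fun i => t ^ (N + 1 - i.val)) (fun i j hij => by
    have hj := j.isLt
    exact hssub _ _ (by omega))
  omega
end
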